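/- arXiv:1701.08703 — 2 statements merged into one kernel-verified Lean document; each statement's English description precedes it below -/
import Mathlib

section
/- Let (S, V) be a complete semiring-semimodule pair and let M ∈ (S^{n×n})^{p*×p*} be a restricted one-counter (roc) matrix with counter symbol p. Then (M^ω)_p = (M_{p,p²} + M_{p,p²}(M*)_{p,ε} + M_{p,p}) · (M^ω)_p. -/
/-!
Common definitions: complete semirings with infinite sums, complete
semiring-semimodule pairs with infinite products, restricted one-counter
(roc) matrices, their star and omega blocks, power series over finite and
infinite words, weighted ω-restricted one-counter automata, and the mixed
context-free grammars obtained by the triple-pair construction.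
-/

/-- The data of a semiring together with sums over arbitrary index sets. -/
structure CSOps (S : Type) where
  add : S → S → S
  mul : S → S → S
  zero : S
  one : S
  iSum : ∀ {ι : Type}, (ι → S) → S

namespace CSOps

variable {S : Type}

/-- Powers `a^m`. -/
def pow (R : CSOps S) (a : S) : ℕ → S
  | 0 => R.one
  | m + 1 => R.mul a (R.pow a m)

/-- The star operation of a complete starsemiring: `a* = Σ_{m≥0} a^m`. -/
def star (R : CSOps S) (a : S) : S := R.iSum fun m : ℕ => R.pow a m

/-- Finite sums of lists of elements. -/
def listSum (R : CSOps S) (l : List S) : S := l.foldr R.add R.zero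

/-- Finite (ordered) products of lists of elements. -/
def listProd (R : CSOps S) (l : List S) : S := l.foldr R.mul R.one

/-- The ordered product `s_a · s_{a+1} ⋯ s_{b-1}`. -/
def rangeProd (R : CSOps S) (s : ℕ → S) (a b : ℕ) : S :=
  R.listProd ((List.range' a (b - a)).map s)

/-- `R` is a complete semiring: the operations form a semiring, the infinite
sums extend the finite ones, are associative and commutative (compatible with
arbitrary partitions of the index set) and satisfy both distributive laws. -/
structure IsComplete (R : CSOps S) : Prop where
  add_assoc : ∀ a b c, R.add (R.add a b) c = R.add a (R.add b c)
  add_comm : ∀ a b, R.add a b = R.add b a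
  zero_add : ∀ a, R.add R.zero a = a
  mul_assoc : ∀ a b c, R.mul (R.mul a b) c = R.mul a (R.mul b c)
  one_mul : ∀ a, R.mul R.one a = a
  mul_one : ∀ a, R.mul a R.one = a
  zero_mul : ∀ a, R.mul R.zero a = R.zero
  mul_zero : ∀ a, R.mul a R.zero = R.zero
  left_distrib : ∀ a b c, R.mul a (R.add b c) = R.add (R.mul a b) (R.mul a c)
  right_distrib : ∀ a b c, R.mul (R.add a b) c = R.add (R.mul a c) (R.mul b c)
  iSum_empty : ∀ {ι : Type} (f : ι → S), IsEmpty ι → R.iSum f = R.zero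
  iSum_single : ∀ {ι : Type} (f : ι → S) (i₀ : ι), (∀ i, i = i₀) → R.iSum f = f i₀
  iSum_pair : ∀ {ι : Type} (f : ι → S) (i₀ i₁ : ι), i₀ ≠ i₁ → (∀ i, i = i₀ ∨ i = i₁) →
      R.iSum f = R.add (f i₀) (f i₁)
  iSum_partition : ∀ {ι κ : Type} (g : ι → κ) (f : ι → S),
      R.iSum (fun j : κ => R.iSum (fun i : {i : ι // g i = j} => f i.1)) = R.iSum f
  mul_iSum : ∀ {ι : Type} (c : S) (f : ι → S), R.mul c (R.iSum f) = R.iSum fun i => R.mul c (f i)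
  iSum_mul : ∀ {ι : Type} (c : S) (f : ι → S), R.mul (R.iSum f) c = R.iSum fun i => R.mul (f i) c

/-- `R` is a continuous starsemiring: it is complete and every infinite sum is
the least upper bound, with respect to the natural order `a ≤ b ↔ ∃ c, a + c = b`,
of the sums over the finite subfamilies. -/
structure IsContinuous (R : CSOps S) : Prop where
  complete : R.IsComplete
  finsumLe : ∀ {ι : Type} (f : ι → S) (l : List ι), l.Nodup →
      ∃ c, R.add (R.listSum (l.map f)) c = R.iSum f
  iSumLeast : ∀ {ι : Type} (f : ι → S) (b : S),
      (∀ l : List ι, l.Nodup → ∃ c, R.add (R.listSum (l.map f)) c = b) →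
      ∃ c, R.add (R.iSum f) c = b

end CSOps

/-- The data of a left `S`-semimodule `V` with sums over arbitrary index sets and
an infinite product operation mapping infinite sequences over `S` to `V`. -/
structure CPOps (S V : Type) where
  vadd : V → V → V
  vzero : V
  smul : S → V → V
  vSum : ∀ {ι : Type}, (ι → V) → V
  iProd : (ℕ → S) → V

namespace CPOps

variable {S V : Type}

/-- `(S, V)` (with operations `R`, `P`) is a complete semiring-semimodule pair. -/
structure IsComplete (R : CSOps S) (P : CPOps S V) : Prop where
  vadd_assoc : ∀ u v w, P.vadd (P.vadd u v) w = P.vadd u (P.vadd v w)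
  vadd_comm : ∀ u v, P.vadd u v = P.vadd v u
  vzero_vadd : ∀ v, P.vadd P.vzero v = v
  mul_smul : ∀ a b v, P.smul (R.mul a b) v = P.smul a (P.smul b v)
  one_smul : ∀ v, P.smul R.one v = v
  add_smul : ∀ a b v, P.smul (R.add a b) v = P.vadd (P.smul a v) (P.smul b v)
  smul_vadd : ∀ a u v, P.smul a (P.vadd u v) = P.vadd (P.smul a u) (P.smul a v)
  zero_smul : ∀ v, P.smul R.zero v = P.vzero
  smul_vzero : ∀ a, P.smul a P.vzero = P.vzero
  vSum_empty : ∀ {ι : Type} (f : ι → V), IsEmpty ι → P.vSum f = P.vzero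
  vSum_single : ∀ {ι : Type} (f : ι → V) (i₀ : ι), (∀ i, i = i₀) → P.vSum f = f i₀
  vSum_pair : ∀ {ι : Type} (f : ι → V) (i₀ i₁ : ι), i₀ ≠ i₁ → (∀ i, i = i₀ ∨ i = i₁) →
      P.vSum f = P.vadd (f i₀) (f i₁)
  vSum_partition : ∀ {ι κ : Type} (g : ι → κ) (f : ι → V),
      P.vSum (fun j : κ => P.vSum (fun i : {i : ι // g i = j} => f i.1)) = P.vSum f
  smul_vSum : ∀ {ι : Type} (a : S) (f : ι → V),
      P.smul a (P.vSum f) = P.vSum fun i => P.smul a (f i)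
  iSum_smul : ∀ {ι : Type} (f : ι → S) (v : V),
      P.smul (R.iSum f) v = P.vSum fun i => P.smul (f i) v
  iProd_regroup : ∀ (s : ℕ → S) (e : ℕ → ℕ), e 0 = 0 → Monotone e →
      P.iProd s = P.iProd fun i => R.rangeProd s (e i) (e (i + 1))
  smul_iProd_shift : ∀ s : ℕ → S, P.smul (s 0) (P.iProd fun i => s (i + 1)) = P.iProd s
  iProd_iSum : ∀ (I : ℕ → Type) (s : ∀ j, I j → S),
      P.iProd (fun j => R.iSum (s j)) = P.vSum fun f : (∀ j, I j) => P.iProd fun j => s j (f j)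

end CPOps

/-! ### Matrices of blocks indexed by the counter contents `p^i ↔ i` -/

/-- An `n × n` block of weights. -/
abbrev Blk (n : ℕ) (S : Type) := Fin n → Fin n → S

def bZero {S : Type} (R : CSOps S) {n : ℕ} : Blk n S := fun _ _ => R.zero

def bOne {S : Type} (R : CSOps S) {n : ℕ} : Blk n S :=
  fun i j => if i = j then R.one else R.zero

def bAdd {S : Type} (R : CSOps S) {n : ℕ} (X Y : Blk n S) : Blk n S :=
  fun i j => R.add (X i j) (Y i j)

def bMul {S : Type} (R : CSOps S) {n : ℕ} (X Y : Blk n S) : Blk n S :=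
  fun i j => R.iSum fun l : Fin n => R.mul (X i l) (Y l j)

def bPow {S : Type} (R : CSOps S) {n : ℕ} (X : Blk n S) : ℕ → Blk n S
  | 0 => bOne R
  | m + 1 => bMul R X (bPow R X m)

/-- A matrix in `(S^{n×n})^{p* × p*}`: rows and columns are indexed by the words
`p^i` (identified with `i : ℕ`) and the entries are `n × n` blocks over `S`. -/
abbrev IMat (n : ℕ) (S : Type) := ℕ → ℕ → Blk n S

def iMatMul {S : Type} (R : CSOps S) {n : ℕ} (M N : IMat n S) : IMat n S :=
  fun i j => fun a b => R.iSum fun l : ℕ => bMul R (M i l) (N l j) a b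

def iMatOne {S : Type} (R : CSOps S) {n : ℕ} : IMat n S :=
  fun i j => if i = j then bOne R else bZero R

def iMatPow {S : Type} (R : CSOps S) {n : ℕ} (M : IMat n S) : ℕ → IMat n S
  | 0 => iMatOne R
  | m + 1 => iMatMul R M (iMatPow R M m)

/-- `iStar R M i j` is the block `(M*)_{p^i, p^j} = Σ_{m≥0} (M^m)_{p^i, p^j}`. -/
def iStar {S : Type} (R : CSOps S) {n : ℕ} (M : IMat n S) : IMat n S :=
  fun i j => fun a b => R.iSum fun m : ℕ => iMatPow R M m i j a b

/-- `M` is a restricted one-counter (roc) matrix (with counter symbol `p`):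
there are blocks `A = M_{p,p²}`, `C = M_{p,p}`, `B = M_{p,ε}` with
`M_{p^k,p^{k+1}} = A`, `M_{p^k,p^k} = C`, `M_{p^k,p^{k-1}} = B` for all `k ≥ 1`,
and all other blocks are `0`. -/
def IsRoc {S : Type} (R : CSOps S) {n : ℕ} (M : IMat n S) : Prop :=
  (∀ k : ℕ, 1 ≤ k → M k (k + 1) = M 1 2 ∧ M k k = M 1 1 ∧ M k (k - 1) = M 1 0) ∧
  (∀ i j : ℕ, (i = 0 ∨ (j ≠ i + 1 ∧ j ≠ i ∧ j + 1 ≠ i)) → M i j = bZero R)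

/-! ### Vectors over the semimodule -/

def vecAdd {S V : Type} (P : CPOps S V) {n : ℕ} (u v : Fin n → V) : Fin n → V :=
  fun a => P.vadd (u a) (v a)

/-- A block acting on a vector of semimodule elements: `(X z)_a = Σ_l X_{a l} z_l`. -/
def matVec {S V : Type} (P : CPOps S V) {n : ℕ} (X : Blk n S) (v : Fin n → V) : Fin n → V :=
  fun a => P.vSum fun l : Fin n => P.smul (X a l) (v l)

/-- A row vector acting on a column vector of semimodule elements: `I z = Σ_m I_m z_m`. -/
def rowAct {S V : Type} (P : CPOps S V) {n : ℕ} (Iv : Fin n → S) (v : Fin n → V) : V :=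
  P.vSum fun m : Fin n => P.smul (Iv m) (v m)

/-- The scalar `I · X · P = Σ_{m₁,m₂} I_{m₁} X_{m₁ m₂} P_{m₂}`. -/
def tripleProd {S : Type} (R : CSOps S) {n : ℕ} (Iv : Fin n → S) (X : Blk n S)
    (Pv : Fin n → S) : S :=
  R.iSum fun q : Fin n × Fin n => R.mul (Iv q.1) (R.mul (X q.1 q.2) (Pv q.2))

/-- The sequence of weights along an infinite path starting in row block `p^i`,
state `j`, and then visiting the blocks `p^{hs 0}, p^{hs 1}, …` in states
`js 0, js 1, …`. -/
def pathEntry {S : Type} {n : ℕ} (M : IMat n S) (i : ℕ) (j : Fin n)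
    (hs : ℕ → ℕ) (js : ℕ → Fin n) : ℕ → S
  | 0 => M i (hs 0) j (js 0)
  | t + 1 => M (hs t) (hs (t + 1)) (js t) (js (t + 1))

/-- The block `(M^ω)_{p^i}` of the column vector `M^ω ∈ (V^n)^{p*}`:
`((M^ω)_{p^i})_j` is the sum over all infinite sequences of pushdown contents and
states of the infinite products of the corresponding entries of `M`. -/
def mOmega {S V : Type} (P : CPOps S V) {n : ℕ} (M : IMat n S) (i : ℕ) : Fin n → V :=
  fun j => P.vSum fun q : (ℕ → ℕ) × (ℕ → Fin n) => P.iProd (pathEntry M i j q.1 q.2)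

/-- `P_k`: the sequences of states (states `1,…,n` being represented by `Fin n`,
state `j+1` by `j : Fin n`) that are `≤ k` (i.e. have representative `< k`)
infinitely often — the Büchi condition with repeated states `{1, …, k}`. -/
def InPk (n k : ℕ) (js : ℕ → Fin n) : Prop := ∀ N : ℕ, ∃ t, N ≤ t ∧ (js t : ℕ) < k

/-- The block `(M^{ω,k})_{p^i}` of the column vector `M^{ω,k} ∈ (V^n)^{p*}`:
the sum over all infinite sequences `i₁, i₂, … ≥ 1` of pushdown contents and all
state sequences in `P_k` of the infinite products of the corresponding entries. -/
def mOmegaK {S V : Type} (P : CPOps S V) {n : ℕ} (M : IMat n S) (k : ℕ) (i : ℕ) :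
    Fin n → V :=
  fun j => P.vSum fun q : {q : (ℕ → ℕ) × (ℕ → Fin n) // (∀ t, 1 ≤ q.1 t) ∧ InPk n k q.2} =>
    P.iProd (pathEntry M i j q.1.1 q.1.2)

/-! ### The algebraic systems -/

/-- The right-hand side `A x x + C x + B` of the algebraic system
`x = M_{p,p²} x x + M_{p,p} x + M_{p,ε}`. -/
def quadRhs {S : Type} (R : CSOps S) {n : ℕ} (Ablk Cblk Bblk X : Blk n S) : Blk n S :=
  bAdd R (bAdd R (bMul R Ablk (bMul R X X)) (bMul R Cblk X)) Bblk

/-- `X` is a solution of `x = A x x + C x + B`. -/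
def IsQuadSol {S : Type} (R : CSOps S) {n : ℕ} (Ablk Cblk Bblk X : Blk n S) : Prop :=
  X = quadRhs R Ablk Cblk Bblk X

/-- The matrix `M_{p,p²} + M_{p,p²}(M*)_{p,ε} + M_{p,p}`. -/
def linMat {S : Type} (R : CSOps S) {n : ℕ} (M : IMat n S) : Blk n S :=
  bAdd R (bAdd R (M 1 2) (bMul R (M 1 2) (iStar R M 1 0))) (M 1 1)

/-- `z` is a solution of the linear equation
`z = (M_{p,p²} + M_{p,p²}(M*)_{p,ε} + M_{p,p}) z` over `V^n`. -/
def IsLinSol {S V : Type} (R : CSOps S) (P : CPOps S V) {n : ℕ} (M : IMat n S)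
    (z : Fin n → V) : Prop :=
  z = matVec P (linMat R M) z

/-- The right-hand side `A z + (A x) z + C z` of the linear system
`z = M_{p,p²} z + M_{p,p²} x z + M_{p,p} z`. -/
def zRhs {S V : Type} (R : CSOps S) (P : CPOps S V) {n : ℕ} (Ablk Cblk x : Blk n S)
    (z : Fin n → V) : Fin n → V :=
  vecAdd P (vecAdd P (matVec P Ablk z) (matVec P (bMul R Ablk x) z)) (matVec P Cblk z)

/-- The behavior `‖C‖ = (I (M*)_{p,ε} P, I (M^{ω,k})_p)` of an
`ω`-restricted one-counter automaton. -/
def rocBehavior {S V : Type} (R : CSOps S) (P : CPOps S V) {n : ℕ} (M : IMat n S)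
    (Iv Pv : Fin n → S) (k : ℕ) : S × V :=
  (tripleProd R Iv (iStar R M 1 0) Pv, rowAct P Iv (mOmegaK P M k 1))

/-! ### Power series over finite and infinite words -/

open Classical in
/-- The complete semiring `S⟪Σ*⟫` of power series over finite words,
with the Cauchy product. -/
noncomputable def finOps {S : Type} (R : CSOps S) (A : Type) : CSOps (List A → S) where
  add s t := fun w => R.add (s w) (t w)
  mul s t := fun w =>
    R.iSum fun u : {u : List A × List A // u.1 ++ u.2 = w} => R.mul (s u.1.1) (t u.1.2)
  zero := fun _ => R.zero
  one := fun w => if w = [] then R.one else R.zero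
  iSum f := fun w => R.iSum fun i => f i w

/-- Concatenation of a finite word with an ω-word. -/
def wcat {A : Type} (u : List A) (v : ℕ → A) : ℕ → A :=
  fun t => if h : t < u.length then u.get ⟨t, h⟩ else v (t - u.length)

/-- Lengths of the partial concatenations of a sequence of finite words. -/
def flen {A : Type} (f : ℕ → List A) : ℕ → ℕ
  | 0 => 0
  | m + 1 => flen f m + (f m).length

/-- `f 0, f 1, f 2, …` is a factorization of the ω-word `w` into finite words:
the concatenation `f 0 · f 1 · ⋯` equals `w`. -/
def IsFact {A : Type} (f : ℕ → List A) (w : ℕ → A) : Prop :=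
  (∀ N : ℕ, ∃ m, N ≤ flen f m) ∧
  (∀ (m i : ℕ) (h : i < (f m).length), (f m).get ⟨i, h⟩ = w (flen f m + i))

/-- The complete semimodule pair operations on `(S⟪Σ*⟫, S⟪Σ^ω⟫)`, for a complete
star-omega semiring `S` given by `R` (sums) and `P0` (the infinite product of
the complete semiring-semimodule pair `(S, S)`). -/
def omOps {S : Type} (R : CSOps S) (P0 : CPOps S S) (A : Type) :
    CPOps (List A → S) ((ℕ → A) → S) where
  vadd s t := fun w => R.add (s w) (t w)
  vzero := fun _ => R.zero
  smul s t := fun w =>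
    R.iSum fun u : {u : List A × (ℕ → A) // wcat u.1 u.2 = w} => R.mul (s u.1.1) (t u.1.2)
  vSum f := fun w => R.iSum fun i => f i w
  iProd s := fun w =>
    R.iSum fun f : {f : ℕ → List A // IsFact f w} => P0.iProd fun j => s j (f.1 j)

/-- A series is a polynomial supported on `Σ ∪ {ε}`, i.e. an element of
`S⟨Σ ∪ {ε}⟩`: its coefficients vanish on words of length `≥ 2`. -/
def PolySupp {S : Type} (R : CSOps S) {A : Type} (s : List A → S) : Prop :=
  ∀ w : List A, 2 ≤ w.length → s w = R.zero

/-! ### The mixed context-free grammar of the triple-pair construction -/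

/-- Variables for finite derivations: `x₀` and the triples `[i, p, j]`. -/
inductive XVar (n : ℕ) where
  | x0 : XVar n
  | tr : Fin n → Fin n → XVar n

/-- Variables for infinite derivations: `z₀` and the pairs `[i, p]`. -/
inductive ZVar (n : ℕ) where
  | z0 : ZVar n
  | pr : Fin n → ZVar n

/-- Sentential forms over the variables for finite derivations and terminals. -/
abbrev SForm (n : ℕ) (A : Type) := List (XVar n ⊕ A)

/-- The productions `P_X` for finite derivations of the grammar `G_k`
constructed from a roc automaton with matrix blocks `M`, initial vector `Iv`
and final vector `Pv` (here `a, b` range over `Σ ∪ {ε}`, represented by words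
of length at most one). -/
inductive XProd {K : Type} (R : CSOps K) {n : ℕ} {A : Type} (M : IMat n (List A → K))
    (Iv Pv : Fin n → List A → K) : XVar n → SForm n A → Prop where
  | start (a b : List A) (m₁ m₂ : Fin n) : a.length ≤ 1 → b.length ≤ 1 →
      R.mul (Iv m₁ a) (Pv m₂ b) ≠ R.zero →
      XProd R M Iv Pv XVar.x0 (a.map Sum.inr ++ Sum.inl (XVar.tr m₁ m₂) :: b.map Sum.inr)
  | push (a : List A) (i j m₁ m₂ : Fin n) : a.length ≤ 1 → M 1 2 i m₁ a ≠ R.zero →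
      XProd R M Iv Pv (XVar.tr i j)
        (a.map Sum.inr ++ [Sum.inl (XVar.tr m₁ m₂), Sum.inl (XVar.tr m₂ j)])
  | stay (a : List A) (i j m : Fin n) : a.length ≤ 1 → M 1 1 i m a ≠ R.zero →
      XProd R M Iv Pv (XVar.tr i j) (a.map Sum.inr ++ [Sum.inl (XVar.tr m j)])
  | pop (a : List A) (i j : Fin n) : a.length ≤ 1 → M 1 0 i j a ≠ R.zero →
      XProd R M Iv Pv (XVar.tr i j) (a.map Sum.inr)

/-- The productions `P_Z` for infinite derivations: `ZProd R M Iv W α m` states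
that `W → α [m, p]` is a production, where `α` is the part of the right-hand
side over `X ∪ Σ` and `[m, p]` is the trailing variable for infinite derivations. -/
inductive ZProd {K : Type} (R : CSOps K) {n : ℕ} {A : Type} (M : IMat n (List A → K))
    (Iv : Fin n → List A → K) : ZVar n → SForm n A → Fin n → Prop where
  | init (a : List A) (m : Fin n) : a.length ≤ 1 → Iv m a ≠ R.zero →
      ZProd R M Iv ZVar.z0 (a.map Sum.inr) m
  | push (a : List A) (i m : Fin n) : a.length ≤ 1 → M 1 2 i m a ≠ R.zero →
      ZProd R M Iv (ZVar.pr i) (a.map Sum.inr) m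
  | pushTr (a : List A) (i m₁ m₂ : Fin n) : a.length ≤ 1 → M 1 2 i m₁ a ≠ R.zero →
      ZProd R M Iv (ZVar.pr i) (a.map Sum.inr ++ [Sum.inl (XVar.tr m₁ m₂)]) m₂
  | stay (a : List A) (i m : Fin n) : a.length ≤ 1 → M 1 1 i m a ≠ R.zero →
      ZProd R M Iv (ZVar.pr i) (a.map Sum.inr) m

/-- One leftmost derivation step: the leftmost variable is rewritten. -/
inductive LMStep {n : ℕ} {A : Type} (Px : XVar n → SForm n A → Prop) :
    SForm n A → SForm n A → Prop where
  | mk (u : List A) (X : XVar n) (β rest : SForm n A) : Px X β →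
      LMStep Px (u.map Sum.inr ++ Sum.inl X :: rest) (u.map Sum.inr ++ (β ++ rest))

/-- The finite-word part of the language of the grammar:
`{w ∈ Σ* | x₀ ⇒_L^* w}`. -/
def FinLang {K : Type} (R : CSOps K) {n : ℕ} {A : Type} (M : IMat n (List A → K))
    (Iv Pv : Fin n → List A → K) : Set (List A) :=
  {w | Relation.ReflTransGen (LMStep (XProd R M Iv Pv)) [Sum.inl XVar.x0] (w.map Sum.inr)}

/-- The set of finite leftmost derivations of the word `w` from `x₀`: lists of
sentential forms beginning with `x₀`, ending with `w`, each step being a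
leftmost rewriting by a production of `P_X`. -/
def finDerivSet {K : Type} (R : CSOps K) {n : ℕ} {A : Type} (M : IMat n (List A → K))
    (Iv Pv : Fin n → List A → K) (w : List A) : Set (List (SForm n A)) :=
  {l | l.Chain' (LMStep (XProd R M Iv Pv)) ∧ l.head? = some [Sum.inl XVar.x0] ∧
       l.getLast? = some (w.map Sum.inr)}

/-- The leftmost variable of a sentential form (the one rewritten in a leftmost
derivation step). -/
def leftVar {n : ℕ} {A : Type} (α : SForm n A) : Option (XVar n) :=
  (α.filterMap Sum.getLeft?).head?

/-- An infinite (leftmost) derivation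
`z₀ ⇒_L α₀[i₀,p] ⇒_L^* w₀[i₀,p] ⇒_L w₀α₁[i₁,p] ⇒_L^* w₀w₁[i₁,p] ⇒_L ⋯`:
the data of the states `i₀, i₁, …`, the sentential forms `α₀, α₁, …`, the
produced finite words `w₀, w₁, …` and the finite leftmost derivations
`α_m ⇒_L^* w_m`. -/
structure InfDeriv {K : Type} (R : CSOps K) {n : ℕ} {A : Type} (M : IMat n (List A → K))
    (Iv Pv : Fin n → List A → K) where
  iseq : ℕ → Fin n
  alph : ℕ → SForm n A
  wseq : ℕ → List A
  fder : ℕ → List (SForm n A)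
  hz0 : ZProd R M Iv ZVar.z0 (alph 0) (iseq 0)
  hz : ∀ m, ZProd R M Iv (ZVar.pr (iseq m)) (alph (m + 1)) (iseq (m + 1))
  hchain : ∀ m, (fder m).Chain' (LMStep (XProd R M Iv Pv))
  hhead : ∀ m, (fder m).head? = some (alph m)
  hlast : ∀ m, (fder m).getLast? = some ((wseq m).map Sum.inr)

/-- The infinite derivation produces the ω-word `w = w₀ w₁ w₂ ⋯`. -/
def InfDeriv.Produces {K : Type} {R : CSOps K} {n : ℕ} {A : Type}
    {M : IMat n (List A → K)} {Iv Pv : Fin n → List A → K}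
    (d : InfDeriv R M Iv Pv) (w : ℕ → A) : Prop :=
  IsFact d.wseq w

/-- The Büchi condition of an `(ω,k)`-derivation: the sequence of first
components of the variables rewritten (`i₀, i₁^1, …, i₁^{t₁}, i₁, i₂^1, …`)
lies in `P_k`, i.e. hits `{1, …, k}` (represented by `Fin`-values `< k`)
infinitely often. -/
def InfDeriv.Buchi {K : Type} {R : CSOps K} {n : ℕ} {A : Type}
    {M : IMat n (List A → K)} {Iv Pv : Fin n → List A → K}
    (d : InfDeriv R M Iv Pv) (k : ℕ) : Prop :=
  ∀ N : ℕ, ∃ m, N ≤ m ∧ ((d.iseq m : ℕ) < k ∨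
    ∃ α ∈ (d.fder m).dropLast, ∃ i j : Fin n,
      leftVar α = some (XVar.tr i j) ∧ (i : ℕ) < k)

/-- The infinite-word part of the language of the grammar `G_k`:
`{w ∈ Σ^ω | z₀ ⇒_L^{ω,k} w}`. -/
def InfLang {K : Type} (R : CSOps K) {n : ℕ} {A : Type} (M : IMat n (List A → K))
    (Iv Pv : Fin n → List A → K) (k : ℕ) : Set (ℕ → A) :=
  {w | ∃ d : InfDeriv R M Iv Pv, d.Produces w ∧ d.Buchi k}

/-! ### Computations of an ω-restricted one-counter automaton -/

/-- One computation step between instantaneous descriptions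
`(state, remaining input, counter)`. -/
def CompStep {K : Type} (R : CSOps K) {n : ℕ} {A : Type} (M : IMat n (List A → K)) :
    (Fin n × List A × ℕ) → (Fin n × List A × ℕ) → Prop := fun c c' =>
  ∃ a : List A, a.length ≤ 1 ∧ c.2.1 = a ++ c'.2.1 ∧ 1 ≤ c.2.2 ∧
    ((c'.2.2 = c.2.2 + 1 ∧ M 1 2 c.1 c'.1 a ≠ R.zero) ∨
     (c'.2.2 = c.2.2 ∧ M 1 1 c.1 c'.1 a ≠ R.zero) ∨
     (c'.2.2 + 1 = c.2.2 ∧ M 1 0 c.1 c'.1 a ≠ R.zero))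

/-- The set of finite computations on input `w`: from an initial instantaneous
description `(i, w, p)` with `I_i ≠ 0` to an accepting instantaneous
description `(j, ε, ε)` with `P_j ≠ 0`. -/
def finCompSet {K : Type} (R : CSOps K) {n : ℕ} {A : Type} (M : IMat n (List A → K))
    (Iv Pv : Fin n → List A → K) (w : List A) : Set (List (Fin n × List A × ℕ)) :=
  {l | l.Chain' (CompStep R M) ∧
       (∃ i : Fin n, Iv i ≠ (fun _ => R.zero) ∧ l.head? = some (i, w, 1)) ∧
       (∃ j : Fin n, Pv j ≠ (fun _ => R.zero) ∧ l.getLast? = some (j, [], 0))}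

/-- An infinite computation of the automaton starting in an initial
instantaneous description `(i, ·, p)` with `I_i ≠ 0`: the sequences of states,
counter values and read letters (`rd m ∈ Σ ∪ {ε}`). -/
structure InfComp {K : Type} (R : CSOps K) {n : ℕ} {A : Type} (M : IMat n (List A → K))
    (Iv : Fin n → List A → K) where
  st : ℕ → Fin n
  ct : ℕ → ℕ
  rd : ℕ → List A
  hI : Iv (st 0) ≠ fun _ => R.zero
  hct0 : ct 0 = 1
  hlen : ∀ m, (rd m).length ≤ 1
  hpos : ∀ m, 1 ≤ ct m
  hstep : ∀ m,
    (ct (m + 1) = ct m + 1 ∧ M 1 2 (st m) (st (m + 1)) (rd m) ≠ R.zero) ∨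
    (ct (m + 1) = ct m ∧ M 1 1 (st m) (st (m + 1)) (rd m) ≠ R.zero) ∨
    (ct (m + 1) + 1 = ct m ∧ M 1 0 (st m) (st (m + 1)) (rd m) ≠ R.zero)

/-- The infinite computation reads exactly the ω-word `w`. -/
def InfComp.Reads {K : Type} {R : CSOps K} {n : ℕ} {A : Type}
    {M : IMat n (List A → K)} {Iv : Fin n → List A → K}
    (d : InfComp R M Iv) (w : ℕ → A) : Prop :=
  IsFact d.rd w

/-- The infinite computation visits the repeated states `{1, …, k}` infinitely
often. -/
def InfComp.Buchi {K : Type} {R : CSOps K} {n : ℕ} {A : Type}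
    {M : IMat n (List A → K)} {Iv : Fin n → List A → K}
    (d : InfComp R M Iv) (k : ℕ) : Prop :=
  ∀ N : ℕ, ∃ m, N ≤ m ∧ (d.st m : ℕ) < k

/-! ### The complete star-omega semirings `𝔹` and `ℕ^∞` -/

open Classical in
/-- The complete semiring `𝔹 = ({0,1}, ∨, ∧, *, 0, 1)`. -/
noncomputable def boolCS : CSOps Bool where
  add a b := a || b
  mul a b := a && b
  zero := false
  one := true
  iSum f := decide (∃ i, f i = true)

open Classical in
/-- The complete semiring-semimodule pair `(𝔹, 𝔹)`, with the infinite product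
making `𝔹` a complete star-omega semiring. -/
noncomputable def boolCP : CPOps Bool Bool where
  vadd a b := a || b
  vzero := false
  smul a b := a && b
  vSum f := decide (∃ i, f i = true)
  iProd s := decide (∀ i, s i = true)

/-- The complete semiring `ℕ^∞ = (ℕ ∪ {∞}, +, ·, *, 0, 1)`: infinite sums are
the suprema of the finite partial sums. -/
noncomputable def enatCS : CSOps ℕ∞ where
  add a b := a + b
  mul a b := a * b
  zero := 0
  one := 1
  iSum {ι} f := ⨆ F : Finset ι, ∑ i ∈ F, f i

open Classical in
/-- The complete semiring-semimodule pair `(ℕ^∞, ℕ^∞)`, with the infinite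
product making `ℕ^∞` a complete star-omega semiring. -/
noncomputable def enatCP : CPOps ℕ∞ ℕ∞ where
  vadd a b := a + b
  vzero := 0
  smul a b := a * b
  vSum {ι} f := ⨆ F : Finset ι, ∑ i ∈ F, f i
  iProd s := if ∃ i, s i = 0 then 0 else ⨆ m : ℕ, ∏ i ∈ Finset.range m, s i

namespace StmtThree

open Classical

variable {S V : Type} {R : CSOps S} {P : CPOps S V}

/-! R-side sum lemmas -/

lemma add_zero' (hR : R.IsComplete) (a : S) : R.add a R.zero = a := by
  rw [hR.add_comm]; exact hR.zero_add a

lemma iSum_congr {ι : Type} {f g : ι → S} (h : ∀ i, f i = g i) :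
    R.iSum f = R.iSum g := by
  have : f = g := funext h; rw [this]

lemma iSum_equiv (hR : R.IsComplete) {ι κ : Type} (e : ι ≃ κ) (f : ι → S) :
    R.iSum f = R.iSum (fun j => f (e.symm j)) := by
  rw [← hR.iSum_partition (g := fun i => e i) (f := f)]
  refine iSum_congr (fun j => ?_)
  exact hR.iSum_single _
    (⟨e.symm j, e.apply_symm_apply j⟩ : {i // e i = j})
    (fun i => Subtype.ext ((e.eq_symm_apply).mpr i.2))

lemma iSum_reindex (hR : R.IsComplete) {ι κ : Type} (e : ι ≃ κ) (f : ι → S) (g : κ → S)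
    (h : ∀ i, f i = g (e i)) : R.iSum f = R.iSum g :=
  (iSum_equiv hR e f).trans (iSum_congr (fun j => by rw [h (e.symm j), e.apply_symm_apply]))

lemma iSum_zero (hR : R.IsComplete) {ι : Type} : R.iSum (fun _ : ι => R.zero) = R.zero := by
  have h1 : R.iSum (fun _ : ι => R.zero) = R.mul R.zero (R.iSum (fun _ : ι => R.one)) := by
    rw [hR.mul_iSum]; exact iSum_congr (fun i => (hR.zero_mul _).symm)
  rw [h1, hR.zero_mul]

lemma iSum_split (hR : R.IsComplete) {ι : Type} (p : ι → Prop) (f : ι → S) :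
    R.iSum f = R.add (R.iSum fun i : {i // p i} => f i.1)
      (R.iSum fun i : {i // ¬ p i} => f i.1) := by
  rw [← hR.iSum_partition (g := fun i => p i) (f := f)]
  rw [hR.iSum_pair _ True False (by simp) (fun c => by
    by_cases h : c
    · exact Or.inl (by simp [h])
    · exact Or.inr (by simp [h]))]
  congr 1
  · exact iSum_reindex hR (Equiv.subtypeEquivRight (p := fun i => (p i) = True)
      (q := fun i => p i) (fun i => by simp)) _ _ (fun i => rfl)
  · exact iSum_reindex hR (Equiv.subtypeEquivRight (p := fun i => (p i) = False)
      (q := fun i => ¬ p i) (fun i => by simp)) _ _ (fun i => rfl)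

lemma iSum_restrict (hR : R.IsComplete) {ι : Type} (p : ι → Prop) (f : ι → S)
    (h0 : ∀ i, ¬ p i → f i = R.zero) :
    R.iSum f = R.iSum (fun i : {i // p i} => f i.1) := by
  rw [iSum_split hR p f]
  have h1 : (fun i : {i // ¬ p i} => f i.1) = fun _ => R.zero := funext fun i => h0 i.1 i.2
  rw [h1, iSum_zero hR, add_zero' hR]

lemma iSum_single_support (hR : R.IsComplete) {ι : Type} (f : ι → S) (i₀ : ι)
    (h0 : ∀ i, i ≠ i₀ → f i = R.zero) : R.iSum f = f i₀ := by
  rw [iSum_restrict hR (fun i => i = i₀) f (fun i h => h0 i h)]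
  exact hR.iSum_single _ (⟨i₀, rfl⟩ : {i // i = i₀}) (fun i => Subtype.ext i.2)

lemma iSum_peel (hR : R.IsComplete) (f : ℕ → S) :
    R.iSum f = R.add (f 0) (R.iSum fun t => f (t + 1)) := by
  rw [iSum_split hR (fun m => m = 0) f]
  congr 1
  · exact hR.iSum_single _ (⟨0, rfl⟩ : {m : ℕ // m = 0}) (fun i => Subtype.ext i.2)
  · exact iSum_reindex hR
      (⟨fun m => m.1 - 1, fun t => ⟨t + 1, t.succ_ne_zero⟩,
        fun m => Subtype.ext (Nat.succ_pred_eq_of_ne_zero m.2), fun t => by simp⟩ :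
        {m : ℕ // ¬ m = 0} ≃ ℕ)
      _ _ (fun m => by show f ↑m = f (↑m - 1 + 1); have := m.2; congr 1; omega)

lemma iSum_prod (hR : R.IsComplete) {α β : Type} (f : α × β → S) :
    R.iSum f = R.iSum (fun a : α => R.iSum (fun b : β => f (a, b))) := by
  rw [← hR.iSum_partition (g := Prod.fst) (f := f)]
  refine iSum_congr (fun a => ?_)
  exact iSum_reindex hR
    (⟨fun x => x.1.2, fun b => ⟨(a, b), rfl⟩,
      fun x => Subtype.ext (Prod.ext x.2.symm rfl), fun b => rfl⟩ :
      {x : α × β // x.1 = a} ≃ β) _ _ (fun x => by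
        have : x.1 = (a, x.1.2) := Prod.ext x.2 rfl
        rw [this]; rfl)

end StmtThree
namespace StmtThree

variable {S V : Type} {R : CSOps S} {P : CPOps S V}

/-! V-side sum lemmas -/

lemma vadd_vzero' (hP : P.IsComplete R) (v : V) : P.vadd v P.vzero = v := by
  rw [hP.vadd_comm]; exact hP.vzero_vadd v

lemma vSum_congr {ι : Type} {f g : ι → V} (h : ∀ i, f i = g i) :
    P.vSum f = P.vSum g := by
  have : f = g := funext h; rw [this]

lemma vSum_equiv (hP : P.IsComplete R) {ι κ : Type} (e : ι ≃ κ) (f : ι → V) :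
    P.vSum f = P.vSum (fun j => f (e.symm j)) := by
  rw [← hP.vSum_partition (g := fun i => e i) (f := f)]
  refine vSum_congr (fun j => ?_)
  exact hP.vSum_single _
    (⟨e.symm j, e.apply_symm_apply j⟩ : {i // e i = j})
    (fun i => Subtype.ext ((e.eq_symm_apply).mpr i.2))

lemma vSum_reindex (hP : P.IsComplete R) {ι κ : Type} (e : ι ≃ κ) (f : ι → V) (g : κ → V)
    (h : ∀ i, f i = g (e i)) : P.vSum f = P.vSum g :=
  (vSum_equiv hP e f).trans (vSum_congr (fun j => by rw [h (e.symm j), e.apply_symm_apply]))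

lemma vSum_vzero (hP : P.IsComplete R) {ι : Type} : P.vSum (fun _ : ι => P.vzero) = P.vzero := by
  have h1 : P.vSum (fun _ : ι => P.vzero) = P.smul R.zero (P.vSum (fun _ : ι => P.vzero)) := by
    rw [hP.smul_vSum]; exact vSum_congr (fun i => (hP.zero_smul _).symm)
  rw [h1, hP.zero_smul]

lemma vSum_split (hP : P.IsComplete R) {ι : Type} (p : ι → Prop) (f : ι → V) :
    P.vSum f = P.vadd (P.vSum fun i : {i // p i} => f i.1)
      (P.vSum fun i : {i // ¬ p i} => f i.1) := by
  rw [← hP.vSum_partition (g := fun i => p i) (f := f)]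
  rw [hP.vSum_pair _ True False (by simp) (fun c => by
    by_cases h : c
    · exact Or.inl (by simp [h])
    · exact Or.inr (by simp [h]))]
  congr 1
  · exact vSum_reindex hP (Equiv.subtypeEquivRight (p := fun i => (p i) = True)
      (q := fun i => p i) (fun i => by simp)) _ _ (fun i => rfl)
  · exact vSum_reindex hP (Equiv.subtypeEquivRight (p := fun i => (p i) = False)
      (q := fun i => ¬ p i) (fun i => by simp)) _ _ (fun i => rfl)

lemma vSum_restrict (hP : P.IsComplete R) {ι : Type} (p : ι → Prop) (f : ι → V)
    (h0 : ∀ i, ¬ p i → f i = P.vzero) :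
    P.vSum f = P.vSum (fun i : {i // p i} => f i.1) := by
  rw [vSum_split hP p f]
  have h1 : (fun i : {i // ¬ p i} => f i.1) = fun _ => P.vzero := funext fun i => h0 i.1 i.2
  rw [h1, vSum_vzero hP, vadd_vzero' hP]

lemma vSum_single_support (hP : P.IsComplete R) {ι : Type} (f : ι → V) (i₀ : ι)
    (h0 : ∀ i, i ≠ i₀ → f i = P.vzero) : P.vSum f = f i₀ := by
  rw [vSum_restrict hP (fun i => i = i₀) f (fun i h => h0 i h)]
  exact hP.vSum_single _ (⟨i₀, rfl⟩ : {i // i = i₀}) (fun i => Subtype.ext i.2)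

lemma vSum_two_support (hP : P.IsComplete R) {ι : Type} (f : ι → V) (a b : ι) (hab : a ≠ b)
    (h0 : ∀ i, i ≠ a → i ≠ b → f i = P.vzero) :
    P.vSum f = P.vadd (f a) (f b) := by
  rw [vSum_split hP (fun i => i = a) f]
  congr 1
  · exact hP.vSum_single _ (⟨a, rfl⟩ : {i // i = a}) (fun i => Subtype.ext i.2)
  · rw [vSum_restrict hP (fun i : {i // ¬ i = a} => i.1 = b) _
      (fun i hi => h0 i.1 i.2 hi)]
    exact hP.vSum_single _
      (⟨⟨b, fun h => hab h.symm⟩, rfl⟩ : {i : {i // ¬ i = a} // i.1 = b})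
      (fun i => Subtype.ext (Subtype.ext i.2))

lemma vSum_peel (hP : P.IsComplete R) (f : ℕ → V) :
    P.vSum f = P.vadd (f 0) (P.vSum fun t => f (t + 1)) := by
  rw [vSum_split hP (fun m => m = 0) f]
  congr 1
  · exact hP.vSum_single _ (⟨0, rfl⟩ : {m : ℕ // m = 0}) (fun i => Subtype.ext i.2)
  · exact vSum_reindex hP
      (⟨fun m => m.1 - 1, fun t => ⟨t + 1, t.succ_ne_zero⟩,
        fun m => Subtype.ext (Nat.succ_pred_eq_of_ne_zero m.2), fun t => by simp⟩ :
        {m : ℕ // ¬ m = 0} ≃ ℕ)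
      _ _ (fun m => by show f ↑m = f (↑m - 1 + 1); have := m.2; congr 1; omega)

lemma vSum_prod_fst (hP : P.IsComplete R) {α β : Type} (f : α × β → V) :
    P.vSum f = P.vSum (fun a : α => P.vSum (fun b : β => f (a, b))) := by
  rw [← hP.vSum_partition (g := Prod.fst) (f := f)]
  refine vSum_congr (fun a => ?_)
  exact vSum_reindex hP
    (⟨fun x => x.1.2, fun b => ⟨(a, b), rfl⟩,
      fun x => Subtype.ext (Prod.ext x.2.symm rfl), fun b => rfl⟩ :
      {x : α × β // x.1 = a} ≃ β) _ _ (fun x => by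
        have : x.1 = (a, x.1.2) := Prod.ext x.2 rfl
        rw [this]; rfl)

lemma vSum_prod_snd (hP : P.IsComplete R) {α β : Type} (f : α × β → V) :
    P.vSum f = P.vSum (fun b : β => P.vSum (fun a : α => f (a, b))) := by
  rw [← hP.vSum_partition (g := Prod.snd) (f := f)]
  refine vSum_congr (fun b => ?_)
  exact vSum_reindex hP
    (⟨fun x => x.1.1, fun a => ⟨(a, b), rfl⟩,
      fun x => Subtype.ext (Prod.ext rfl x.2.symm), fun a => rfl⟩ :
      {x : α × β // x.2 = b} ≃ α) _ _ (fun x => by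
        have : x.1 = (x.1.1, b) := Prod.ext rfl x.2
        rw [this]; rfl)

lemma vSum_vadd (hP : P.IsComplete R) {ι : Type} (f g : ι → V) :
    P.vSum (fun i => P.vadd (f i) (g i)) = P.vadd (P.vSum f) (P.vSum g) := by
  have h1 : ∀ (u v : ι → V) (i : ι),
      P.vSum (fun b : Bool => if b then u i else v i) = P.vadd (u i) (v i) := by
    intro u v i
    rw [hP.vSum_pair _ true false (by simp) (fun b => by cases b <;> simp)]
    simp
  have h2 : P.vSum (fun x : ι × Bool => if x.2 then f x.1 else g x.1)
      = P.vSum (fun i => P.vadd (f i) (g i)) := by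
    rw [vSum_prod_fst hP]
    exact vSum_congr (fun i => h1 f g i)
  have h3 : P.vSum (fun x : ι × Bool => if x.2 then f x.1 else g x.1)
      = P.vadd (P.vSum f) (P.vSum g) := by
    rw [vSum_prod_snd hP]
    rw [hP.vSum_pair _ true false (by simp) (fun b => by cases b <;> simp)]
    simp
  rw [← h2, h3]

/-- If some factor is zero, the infinite product is zero. -/
lemma iProd_zero (hR : R.IsComplete) (hP : P.IsComplete R) (s : ℕ → S) (t₀ : ℕ)
    (h : s t₀ = R.zero) : P.iProd s = P.vzero := by
  have key : ∀ j, R.iSum (fun _ : PLift (j ≠ t₀) => s j) = s j := by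
    intro j
    by_cases hj : j = t₀
    · subst hj
      rw [hR.iSum_empty _ ⟨fun x => x.down rfl⟩, h]
    · exact hR.iSum_single _ ⟨hj⟩ (fun i => Subsingleton.elim _ _)
  have h2 : P.iProd s = P.iProd (fun j => R.iSum (fun _ : PLift (j ≠ t₀) => s j)) := by
    refine congrArg _ (funext fun j => (key j).symm)
  rw [h2, hP.iProd_iSum (fun j => PLift (j ≠ t₀)) (fun j _ => s j)]
  exact hP.vSum_empty _ ⟨fun f => (f t₀).down rfl⟩

end StmtThree
namespace StmtThree

variable {S V : Type} {R : CSOps S} {P : CPOps S V} {n : ℕ}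

/-! Paths, cons and shift -/

abbrev Pth (n : ℕ) := (ℕ → ℕ) × (ℕ → Fin n)

def consF {α : Type} (h : α) (f : ℕ → α) : ℕ → α
  | 0 => h
  | t + 1 => f t

def shiftQ (q : Pth n) : Pth n := (fun t => q.1 (t + 1), fun t => q.2 (t + 1))

def consQ (h : ℕ) (v : Fin n) (q : Pth n) : Pth n := (consF h q.1, consF v q.2)

lemma consF_head_shift {α : Type} (f : ℕ → α) : consF (f 0) (fun t => f (t + 1)) = f :=
  funext fun t => by cases t <;> rfl

lemma consF_eq {α : Type} (f : ℕ → α) (h : α) (hh : f 0 = h) :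
    consF h (fun t => f (t + 1)) = f := by subst hh; exact consF_head_shift f

lemma shiftQ_consQ (h : ℕ) (v : Fin n) (q : Pth n) : shiftQ (consQ h v q) = q := rfl

lemma pathEntry_cons_succ (M : IMat n S) (k : ℕ) (j : Fin n) (h : ℕ) (v : Fin n)
    (hs : ℕ → ℕ) (js : ℕ → Fin n) :
    (fun i => pathEntry M k j (consF h hs) (consF v js) (i + 1)) = pathEntry M h v hs js :=
  funext fun i => by cases i <;> rfl

lemma iProd_cons (hP : P.IsComplete R) (M : IMat n S) (k : ℕ) (j : Fin n) (h : ℕ) (v : Fin n)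
    (hs : ℕ → ℕ) (js : ℕ → Fin n) :
    P.iProd (pathEntry M k j (consF h hs) (consF v js)) =
      P.smul (M k h j v) (P.iProd (pathEntry M h v hs js)) := by
  rw [← hP.smul_iProd_shift (pathEntry M k j (consF h hs) (consF v js))]
  rw [pathEntry_cons_succ]
  rfl

/-- The generic cons/shift equivalence on constrained paths. -/
def consEquiv (h : ℕ) (v : Fin n) (D : Pth n → Prop) :
    {q : Pth n // q.1 0 = h ∧ q.2 0 = v ∧ D (shiftQ q)} ≃ {q : Pth n // D q} where
  toFun x := ⟨shiftQ x.1, x.2.2.2⟩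
  invFun q := ⟨consQ h v q.1, rfl, rfl, by rw [shiftQ_consQ]; exact q.2⟩
  left_inv x := Subtype.ext (Prod.ext
    (consF_eq x.1.1 h x.2.1) (consF_eq x.1.2 v x.2.2.1))
  right_inv q := Subtype.ext rfl

/-! Roc matrix facts -/

lemma Mshift (M : IMat n S) (hM : IsRoc R M) (k m : ℕ) (hk : 1 ≤ k) :
    M (k + 1) (m + 1) = M k m := by
  by_cases h1 : m = k + 1
  · subst h1
    rw [(hM.1 (k + 1) (by omega)).1, (hM.1 k hk).1]
  by_cases h2 : m = k
  · subst h2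
    rw [(hM.1 (m + 1) (by omega)).2.1, (hM.1 m hk).2.1]
  by_cases h3 : m + 1 = k
  · subst h3
    show M (m + 1 + 1) (m + 1 + 1 - 1) = M (m + 1) (m + 1 - 1)
    rw [(hM.1 (m + 1 + 1) (by omega)).2.2, (hM.1 (m + 1) (by omega)).2.2]
  · rw [hM.2 (k + 1) (m + 1) (Or.inr ⟨by omega, by omega, by omega⟩),
      hM.2 k m (Or.inr ⟨by omega, by omega, by omega⟩)]

lemma Mrow0 (M : IMat n S) (hM : IsRoc R M) (c : ℕ) : M 0 c = bZero R :=
  hM.2 0 c (Or.inl rfl)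

lemma powRow0 (hR : R.IsComplete) (M : IMat n S) (hM : IsRoc R M) (m : ℕ) (hm : 1 ≤ m)
    (c : ℕ) : iMatPow R M m 0 c = bZero R := by
  cases m with
  | zero => omega
  | succ t =>
    funext a b
    show R.iSum (fun l : ℕ => bMul R (M 0 l) (iMatPow R M t l c) a b) = R.zero
    rw [iSum_congr (g := fun _ : ℕ => R.zero) (fun l => ?_)]
    · exact iSum_zero hR
    · show R.iSum (fun v : Fin n => R.mul (M 0 l a v) (iMatPow R M t l c v b)) = R.zero
      rw [iSum_congr (g := fun _ : Fin n => R.zero) (fun v => ?_)]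
      · exact iSum_zero hR
      · rw [Mrow0 M hM l]
        exact hR.zero_mul _

lemma pow_one (hR : R.IsComplete) (M : IMat n S) (k c : ℕ) (j l : Fin n) :
    iMatPow R M 1 k c j l = M k c j l := by
  show R.iSum (fun h : ℕ => bMul R (M k h) (iMatOne R h c) j l) = M k c j l
  rw [iSum_single_support hR _ c (fun h hne => ?_)]
  · show R.iSum (fun v : Fin n => R.mul (M k c j v) (iMatOne R c c v l)) = M k c j l
    rw [iSum_single_support hR _ l (fun v hne => ?_)]
    · show R.mul (M k c j l) (iMatOne R c c l l) = M k c j l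
      have e : iMatOne R c c l l = R.one := by simp [iMatOne, bOne]
      rw [e]; exact hR.mul_one _
    · show R.mul (M k c j v) (iMatOne R c c v l) = R.zero
      have e : iMatOne R c c v l = R.zero := by simp [iMatOne, bOne, hne]
      rw [e]; exact hR.mul_zero _
  · show R.iSum (fun v : Fin n => R.mul (M k h j v) (iMatOne R h c v l)) = R.zero
    rw [iSum_congr (g := fun _ : Fin n => R.zero) (fun v => ?_)]
    · exact iSum_zero hR
    · have e : iMatOne R h c v l = R.zero := by simp [iMatOne, bZero, hne]
      rw [e]; exact hR.mul_zero _

end StmtThree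
namespace StmtThree

variable {S V : Type} {R : CSOps S} {P : CPOps S V} {n : ℕ}

/-! matVec algebra -/

lemma matVec_bAdd (hP : P.IsComplete R) (X Y : Blk n S) (z : Fin n → V) :
    matVec P (bAdd R X Y) z = vecAdd P (matVec P X z) (matVec P Y z) := by
  funext a
  show P.vSum (fun l => P.smul (R.add (X a l) (Y a l)) (z l)) = _
  rw [vSum_congr (g := fun l => P.vadd (P.smul (X a l) (z l)) (P.smul (Y a l) (z l)))
    (fun l => hP.add_smul _ _ _)]
  exact vSum_vadd hP _ _

lemma matVec_vecAdd (hP : P.IsComplete R) (X : Blk n S) (u v : Fin n → V) :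
    matVec P X (vecAdd P u v) = vecAdd P (matVec P X u) (matVec P X v) := by
  funext a
  show P.vSum (fun l => P.smul (X a l) (P.vadd (u l) (v l))) = _
  rw [vSum_congr (g := fun l => P.vadd (P.smul (X a l) (u l)) (P.smul (X a l) (v l)))
    (fun l => hP.smul_vadd _ _ _)]
  exact vSum_vadd hP _ _

lemma matVec_bMul (hR : R.IsComplete) (hP : P.IsComplete R) (X Y : Blk n S) (z : Fin n → V) :
    matVec P (bMul R X Y) z = matVec P X (matVec P Y z) := by
  funext a
  show P.vSum (fun l => P.smul (R.iSum fun m => R.mul (X a m) (Y m l)) (z l)) = _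
  rw [vSum_congr (g := fun l => P.vSum (fun m : Fin n => P.smul (R.mul (X a m) (Y m l)) (z l)))
    (fun l => hP.iSum_smul _ _)]
  rw [← vSum_prod_fst hP (fun x : Fin n × Fin n => P.smul (R.mul (X a x.2) (Y x.2 x.1)) (z x.1))]
  rw [vSum_prod_snd hP]
  show _ = P.vSum (fun m : Fin n => P.smul (X a m) (matVec P Y z m))
  refine vSum_congr (fun m => ?_)
  rw [vSum_congr (g := fun l : Fin n => P.smul (X a m) (P.smul (Y m l) (z l)))
    (fun l => hP.mul_smul _ _ _)]
  exact (hP.smul_vSum _ _).symm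

/-- Head-splitting equivalence. -/
def headEquiv (x : ℕ × Fin n) (D : Pth n → Prop) :
    {q : Pth n // (q.1 0, q.2 0) = x ∧ D (shiftQ q)} ≃ {q : Pth n // D q} :=
  (Equiv.subtypeEquivRight (fun q =>
    ⟨fun h => ⟨congrArg Prod.fst h.1, congrArg Prod.snd h.1, h.2⟩,
     fun h => ⟨Prod.ext h.1 h.2.1, h.2.2⟩⟩)).trans (consEquiv x.1 x.2 D)

/-! Expansion of mOmega -/

lemma mOmega_expand (hP : P.IsComplete R) (M : IMat n S) (k : ℕ) (j : Fin n) :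
    mOmega P M k j =
      P.vSum (fun x : ℕ × Fin n => P.smul (M k x.1 j x.2) (mOmega P M x.1 x.2)) := by
  show P.vSum (fun q : Pth n => P.iProd (pathEntry M k j q.1 q.2)) = _
  rw [← hP.vSum_partition (g := fun q : Pth n => (q.1 0, q.2 0))
    (f := fun q : Pth n => P.iProd (pathEntry M k j q.1 q.2))]
  refine vSum_congr (fun x => ?_)
  rw [vSum_reindex hP
    ((Equiv.subtypeEquivRight (p := fun q : Pth n => (q.1 0, q.2 0) = x)
        (q := fun q : Pth n => (q.1 0, q.2 0) = x ∧ (fun _ => True) (shiftQ q))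
        (fun q => ⟨fun h => ⟨h, trivial⟩, fun h => h.1⟩)).trans
      ((headEquiv x (fun _ => True)).trans (Equiv.subtypeUnivEquiv (fun _ => trivial)))) _
    (fun q' : Pth n => P.smul (M k x.1 j x.2) (P.iProd (pathEntry M x.1 x.2 q'.1 q'.2)))
    (fun y => ?_)]
  · exact (hP.smul_vSum _ _).symm
  · obtain ⟨h1, h2⟩ : y.1.1 0 = x.1 ∧ y.1.2 0 = x.2 :=
      ⟨congrArg Prod.fst y.2, congrArg Prod.snd y.2⟩
    conv_lhs => rw [← consF_eq y.1.1 x.1 h1, ← consF_eq y.1.2 x.2 h2]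
    rw [iProd_cons hP]
    rfl

end StmtThree
namespace StmtThree

variable {S V : Type} {R : CSOps S} {P : CPOps S V} {n : ℕ}

lemma mOmega_level0 (hR : R.IsComplete) (hP : P.IsComplete R) (M : IMat n S)
    (hM : IsRoc R M) (l : Fin n) : mOmega P M 0 l = P.vzero := by
  show P.vSum (fun q : Pth n => P.iProd (pathEntry M 0 l q.1 q.2)) = P.vzero
  rw [vSum_congr (g := fun _ : Pth n => P.vzero) (fun q => ?_)]
  · exact vSum_vzero hP
  · refine iProd_zero hR hP _ 0 ?_
    show M 0 (q.1 0) l (q.2 0) = R.zero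
    rw [Mrow0 M hM]
    rfl

lemma step_a (hR : R.IsComplete) (hP : P.IsComplete R) (M : IMat n S) (hM : IsRoc R M)
    (j : Fin n) :
    mOmega P M 1 j = P.vadd (matVec P (M 1 1) (mOmega P M 1) j)
      (matVec P (M 1 2) (mOmega P M 2) j) := by
  rw [mOmega_expand hP M 1 j]
  rw [vSum_prod_fst hP (fun x : ℕ × Fin n => P.smul (M 1 x.1 j x.2) (mOmega P M x.1 x.2))]
  refine (vSum_two_support hP _ 1 2 (by omega) (fun h h1 h2 => ?_)).trans rfl
  rcases Nat.eq_zero_or_pos h with h0 | hpos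
  · subst h0
    rw [vSum_congr (g := fun _ : Fin n => P.vzero) (fun v => ?_)]
    · exact vSum_vzero hP
    · rw [mOmega_level0 hR hP M hM v]
      exact hP.smul_vzero _
  · rw [vSum_congr (g := fun _ : Fin n => P.vzero) (fun v => ?_)]
    · exact vSum_vzero hP
    · have hz : M 1 h = bZero R :=
        hM.2 1 h (Or.inr ⟨by omega, h1, by omega⟩)
      have : M 1 h j v = R.zero := by rw [hz]; rfl
      rw [this, hP.zero_smul]

end StmtThree
namespace StmtThree

variable {S V : Type} {R : CSOps S} {P : CPOps S V} {n : ℕ}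

/-- First passage to counter value `1` at time `t`, in state `l`. -/
def ClS (n : ℕ) (t : ℕ) (l : Fin n) (q : Pth n) : Prop :=
  q.1 t = 1 ∧ q.2 t = l ∧ ∀ s < t, 2 ≤ q.1 s

lemma W_eq (hR : R.IsComplete) (hP : P.IsComplete R) (M : IMat n S) (hM : IsRoc R M) :
    ∀ (t k : ℕ), 2 ≤ k → ∀ (j l : Fin n),
      P.vSum (fun x : {q : Pth n // ClS n t l q} => P.iProd (pathEntry M k j x.1.1 x.1.2))
        = P.smul (iMatPow R M (t + 1) (k - 1) 0 j l) (mOmega P M 1 l) := by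
  intro t
  induction t with
  | zero =>
    intro k hk j l
    obtain ⟨a, rfl⟩ : ∃ a, k = a + 2 := ⟨k - 2, by omega⟩
    rw [vSum_reindex hP
      ((Equiv.subtypeEquivRight (p := ClS n 0 l)
          (q := fun q : Pth n => (q.1 0, q.2 0) = (1, l) ∧ (fun _ => True) (shiftQ q))
          (fun q => ⟨fun h => ⟨Prod.ext h.1 h.2.1, trivial⟩,
                     fun h => ⟨congrArg Prod.fst h.1, congrArg Prod.snd h.1,
                       fun s hs => absurd hs (Nat.not_lt_zero s)⟩⟩)).trans
        ((headEquiv (1, l) (fun _ => True)).trans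
          (Equiv.subtypeUnivEquiv (fun _ => trivial)))) _
      (fun q' : Pth n => P.smul (M (a + 2) 1 j l) (P.iProd (pathEntry M 1 l q'.1 q'.2)))
      (fun y => ?_)]
    · rw [← hP.smul_vSum]
      show P.smul (M (a + 2) 1 j l) (mOmega P M 1 l) = _
      congr 1
      show M (a + 2) 1 j l = iMatPow R M 1 (a + 1) 0 j l
      rw [pow_one hR M (a + 1) 0 j l]
      exact congrFun (congrFun (Mshift M hM (a + 1) 0 (by omega)) j) l
    · obtain ⟨h1, h2, _⟩ := y.2
      conv_lhs => rw [← consF_eq y.1.1 1 h1, ← consF_eq y.1.2 l h2]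
      rw [iProd_cons hP]
      rfl
  | succ t IH =>
    intro k hk j l
    obtain ⟨a, rfl⟩ : ∃ a, k = a + 2 := ⟨k - 2, by omega⟩
    rw [← hP.vSum_partition
      (g := fun x : {q : Pth n // ClS n (t + 1) l q} => (x.1.1 0, x.1.2 0))
      (f := fun x : {q : Pth n // ClS n (t + 1) l q} =>
        P.iProd (pathEntry M (a + 2) j x.1.1 x.1.2))]
    rw [vSum_congr (g := fun hv : ℕ × Fin n =>
      P.smul (R.mul (M (a + 2) hv.1 j hv.2) (iMatPow R M (t + 1) (hv.1 - 1) 0 hv.2 l))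
        (mOmega P M 1 l)) (fun hv => ?_)]
    · rw [← hP.iSum_smul]
      congr 1
      show _ = R.iSum (fun h : ℕ => bMul R (M (a + 1) h) (iMatPow R M (t + 1) h 0) j l)
      rw [iSum_prod hR (fun hv : ℕ × Fin n =>
        R.mul (M (a + 2) hv.1 j hv.2) (iMatPow R M (t + 1) (hv.1 - 1) 0 hv.2 l))]
      rw [iSum_peel hR (fun h : ℕ => R.iSum (fun v : Fin n =>
        R.mul (M (a + 2) h j v) (iMatPow R M (t + 1) (h - 1) 0 v l)))]
      have hz : (R.iSum fun v : Fin n =>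
          R.mul (M (a + 2) 0 j v) (iMatPow R M (t + 1) (0 - 1) 0 v l)) = R.zero := by
        rw [iSum_congr (g := fun _ : Fin n => R.zero) (fun v => ?_)]
        · exact iSum_zero hR
        · have : M (a + 2) 0 j v = R.zero := by
            rw [hM.2 (a + 2) 0 (Or.inr ⟨by omega, by omega, by omega⟩)]; rfl
          rw [this]; exact hR.zero_mul _
      rw [hz, hR.zero_add]
      refine iSum_congr (fun h => ?_)
      show R.iSum (fun v : Fin n =>
          R.mul (M (a + 1 + 1) (h + 1) j v) (iMatPow R M (t + 1) h 0 v l)) = _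
      rw [Mshift M hM (a + 1) h (by omega)]
      rfl
    · by_cases h2 : 2 ≤ hv.1
      · rw [vSum_reindex hP
          (((Equiv.subtypeSubtypeEquivSubtypeInter (ClS n (t + 1) l)
              (fun q : Pth n => (q.1 0, q.2 0) = hv)).trans
            ((Equiv.subtypeEquivRight (fun q => ?_)).trans
              (headEquiv hv (ClS n t l)))) :
            {x : {q : Pth n // ClS n (t + 1) l q} // (x.1.1 0, x.1.2 0) = hv}
              ≃ {q : Pth n // ClS n t l q}) _
          (fun y : {q : Pth n // ClS n t l q} =>
            P.smul (M (a + 2) hv.1 j hv.2) (P.iProd (pathEntry M hv.1 hv.2 y.1.1 y.1.2)))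
          (fun x => ?_)]
        · rw [← hP.smul_vSum, IH hv.1 h2 hv.2 l]
          exact (hP.mul_smul _ _ _).symm
        · constructor
          · rintro ⟨hc, he⟩
            exact ⟨he, hc.1, hc.2.1, fun s hs => hc.2.2 (s + 1) (by omega)⟩
          · rintro ⟨he, hcl⟩
            refine ⟨⟨hcl.1, hcl.2.1, fun s hs => ?_⟩, he⟩
            cases s with
            | zero =>
              have : q.1 0 = hv.1 := congrArg Prod.fst he
              omega
            | succ s => exact hcl.2.2 s (by omega)
        · obtain ⟨h1', h2'⟩ : x.1.1.1 0 = hv.1 ∧ x.1.1.2 0 = hv.2 :=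
            ⟨congrArg Prod.fst x.2, congrArg Prod.snd x.2⟩
          show P.iProd (pathEntry M (a + 2) j x.1.1.1 x.1.1.2) = _
          conv_lhs => rw [← consF_eq x.1.1.1 hv.1 h1', ← consF_eq x.1.1.2 hv.2 h2']
          rw [iProd_cons hP]
          rfl
      · have hE : IsEmpty {x : {q : Pth n // ClS n (t + 1) l q} //
            (fun x : {q : Pth n // ClS n (t + 1) l q} => (x.1.1 0, x.1.2 0)) x = hv} := by
          refine ⟨fun x => ?_⟩
          have hb := x.1.2.2.2 0 (by omega)
          have hf : x.1.1.1 0 = hv.1 := congrArg Prod.fst x.2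
          omega
        rw [hP.vSum_empty _ hE]
        show P.vzero = P.smul (R.mul (M (a + 2) hv.1 j hv.2)
          (iMatPow R M (t + 1) (hv.1 - 1) 0 hv.2 l)) (mOmega P M 1 l)
        rcases Nat.eq_zero_or_pos hv.1 with h0 | hpos
        · have : M (a + 2) hv.1 j hv.2 = R.zero := by
            rw [h0, hM.2 (a + 2) 0 (Or.inr ⟨by omega, by omega, by omega⟩)]; rfl
          rw [this, hR.zero_mul, hP.zero_smul]
        · have h1 : hv.1 = 1 := by omega
          have : iMatPow R M (t + 1) (hv.1 - 1) 0 hv.2 l = R.zero := by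
            have e : hv.1 - 1 = 0 := by omega
            rw [e, powRow0 hR M hM (t + 1) (by omega) 0]; rfl
          rw [this, hR.mul_zero, hP.zero_smul]

end StmtThree
namespace StmtThree

variable {S V : Type} {R : CSOps S} {P : CPOps S V} {n : ℕ}

lemma first_unique {q : Pth n} {t t' : ℕ}
    (h : q.1 t = 1 ∧ ∀ s < t, 2 ≤ q.1 s) (h' : q.1 t' = 1 ∧ ∀ s < t', 2 ≤ q.1 s) :
    t = t' := by
  rcases lt_trichotomy t t' with hl | he | hg
  · have := h'.2 t hl; have := h.1; omega
  · exact he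
  · have := h.2 t' hg; have := h'.1; omega

/-- The fibers of the first-passage decomposition. -/
def fpFiber (x1 : ℕ × Fin n) :
    {y : {q : Pth n // ∃ t, q.1 t = 1 ∧ ∀ s < t, 2 ≤ q.1 s} //
       (Nat.find y.2, y.1.2 (Nat.find y.2)) = x1} ≃ {q : Pth n // ClS n x1.1 x1.2 q} where
  toFun y := ⟨y.1.1, by
    have hspec := Nat.find_spec y.1.2
    have hfst : Nat.find y.1.2 = x1.1 := congrArg Prod.fst y.2
    have hsnd : y.1.1.2 (Nat.find y.1.2) = x1.2 := congrArg Prod.snd y.2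
    rw [hfst] at hspec hsnd
    exact ⟨hspec.1, hsnd, hspec.2⟩⟩
  invFun z := ⟨⟨z.1, ⟨x1.1, z.2.1, z.2.2.2⟩⟩, by
    have hf : Nat.find (⟨x1.1, z.2.1, z.2.2.2⟩ :
        ∃ t, z.1.1 t = 1 ∧ ∀ s < t, 2 ≤ z.1.1 s) = x1.1 :=
      first_unique (Nat.find_spec (⟨x1.1, z.2.1, z.2.2.2⟩ :
        ∃ t, z.1.1 t = 1 ∧ ∀ s < t, 2 ≤ z.1.1 s)) ⟨z.2.1, z.2.2.2⟩
    refine Prod.ext hf ?_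
    rw [hf]
    exact z.2.2.1⟩
  left_inv y := Subtype.ext (Subtype.ext rfl)
  right_inv z := Subtype.ext rfl

lemma step_b (hR : R.IsComplete) (hP : P.IsComplete R) (M : IMat n S) (hM : IsRoc R M)
    (j : Fin n) :
    mOmega P M 2 j =
      P.vadd (mOmega P M 1 j) (matVec P (iStar R M 1 0) (mOmega P M 1) j) := by
  show P.vSum (fun q : Pth n => P.iProd (pathEntry M 2 j q.1 q.2)) = _
  rw [vSum_split hP (fun q : Pth n => ∀ t, 2 ≤ q.1 t) _]
  congr 1
  -- Part 1: paths staying at counter ≥ 2 forever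
  · rw [vSum_reindex hP
      (⟨fun x => ⟨(fun t => x.1.1 t - 1, x.1.2), fun t => by
          have := x.2 t; show 1 ≤ x.1.1 t - 1; omega⟩,
        fun y => ⟨(fun t => y.1.1 t + 1, y.1.2), fun t => by
          have := y.2 t; show 2 ≤ y.1.1 t + 1; omega⟩,
        fun x => Subtype.ext (Prod.ext (funext fun t => by
          have := x.2 t; show x.1.1 t - 1 + 1 = x.1.1 t; omega) rfl),
        fun y => Subtype.ext (Prod.ext (funext fun t => by
          show y.1.1 t + 1 - 1 = y.1.1 t; omega) rfl)⟩ :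
        {q : Pth n // ∀ t, 2 ≤ q.1 t} ≃ {q : Pth n // ∀ t, 1 ≤ q.1 t}) _
      (fun y : {q : Pth n // ∀ t, 1 ≤ q.1 t} =>
        P.iProd (pathEntry M 1 j y.1.1 y.1.2)) (fun x => ?_)]
    · refine (vSum_restrict hP (fun q : Pth n => ∀ t, 1 ≤ q.1 t)
        (fun q : Pth n => P.iProd (pathEntry M 1 j q.1 q.2)) (fun q hq => ?_)).symm
      obtain ⟨t, ht⟩ : ∃ t, q.1 t = 0 := by
        by_contra hc
        push_neg at hc
        exact hq (fun t => by have := hc t; omega)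
      refine iProd_zero hR hP _ (t + 1) ?_
      show M (q.1 t) (q.1 (t + 1)) (q.2 t) (q.2 (t + 1)) = R.zero
      rw [ht, Mrow0 M hM]
      rfl
    · refine congrArg P.iProd (funext fun i => ?_)
      cases i with
      | zero =>
        obtain ⟨m, hm⟩ : ∃ m, x.1.1 0 = m + 1 + 1 := ⟨x.1.1 0 - 2, by have := x.2 0; omega⟩
        show M 2 (x.1.1 0) j (x.1.2 0) = M 1 (x.1.1 0 - 1) j (x.1.2 0)
        rw [hm]
        show M (1 + 1) (m + 1 + 1) j (x.1.2 0) = M 1 (m + 1) j (x.1.2 0)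
        exact congrFun (congrFun (Mshift M hM 1 (m + 1) (by omega)) j) _
      | succ s =>
        obtain ⟨c, hc⟩ : ∃ c, x.1.1 s = c + 1 + 1 := ⟨x.1.1 s - 2, by have := x.2 s; omega⟩
        obtain ⟨d, hd⟩ : ∃ d, x.1.1 (s + 1) = d + 1 + 1 :=
          ⟨x.1.1 (s + 1) - 2, by have := x.2 (s + 1); omega⟩
        show M (x.1.1 s) (x.1.1 (s + 1)) (x.1.2 s) (x.1.2 (s + 1)) =
          M (x.1.1 s - 1) (x.1.1 (s + 1) - 1) (x.1.2 s) (x.1.2 (s + 1))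
        rw [hc, hd]
        show M (c + 1 + 1) (d + 1 + 1) (x.1.2 s) (x.1.2 (s + 1)) =
          M (c + 1) (d + 1) (x.1.2 s) (x.1.2 (s + 1))
        exact congrFun (congrFun (Mshift M hM (c + 1) (d + 1) (by omega)) _) _
  -- Part 2: paths that reach counter 1
  · rw [vSum_split hP (fun x : {q : Pth n // ¬ ∀ t, 2 ≤ q.1 t} =>
      ∃ t, x.1.1 t = 1 ∧ ∀ s < t, 2 ≤ x.1.1 s) _]
    have hzero : (P.vSum fun x : {x : {q : Pth n // ¬ ∀ t, 2 ≤ q.1 t} //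
        ¬ ∃ t, x.1.1 t = 1 ∧ ∀ s < t, 2 ≤ x.1.1 s} =>
        P.iProd (pathEntry M 2 j x.1.1.1 x.1.1.2)) = P.vzero := by
      rw [vSum_congr (g := fun _ => P.vzero) (fun x => ?_)]
      · exact vSum_vzero hP
      · have hex : ∃ t, x.1.1.1 t ≤ 1 := by
          by_contra hc
          push_neg at hc
          exact x.1.2 (fun t => by have := hc t; omega)
        have ht0 : x.1.1.1 (Nat.find hex) ≤ 1 := Nat.find_spec hex
        have hmin : ∀ s < Nat.find hex, 2 ≤ x.1.1.1 s := fun s hs => by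
          have := Nat.find_min hex hs; omega
        have h0 : x.1.1.1 (Nat.find hex) = 0 := by
          rcases Nat.lt_or_ge (x.1.1.1 (Nat.find hex)) 1 with h | h
          · omega
          · have h1 : x.1.1.1 (Nat.find hex) = 1 := by omega
            exact absurd ⟨Nat.find hex, h1, hmin⟩ x.2
        refine iProd_zero hR hP _ (Nat.find hex + 1) ?_
        show M (x.1.1.1 (Nat.find hex)) (x.1.1.1 (Nat.find hex + 1)) _ _ = R.zero
        rw [h0, Mrow0 M hM]
        rfl
    rw [hzero, vadd_vzero' hP]
    rw [vSum_reindex hP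
      (Equiv.subtypeSubtypeEquivSubtype
        (p := fun q : Pth n => ¬ ∀ t, 2 ≤ q.1 t)
        (q := fun q : Pth n => ∃ t, q.1 t = 1 ∧ ∀ s < t, 2 ≤ q.1 s)
        (fun {q} hq hall => by
          obtain ⟨t, h1, -⟩ := hq
          have := hall t
          omega))
      (fun x : {x : {q : Pth n // ¬ ∀ t, 2 ≤ q.1 t} //
          ∃ t, x.1.1 t = 1 ∧ ∀ s < t, 2 ≤ x.1.1 s} =>
        P.iProd (pathEntry M 2 j x.1.1.1 x.1.1.2))
      (fun y : {q : Pth n // ∃ t, q.1 t = 1 ∧ ∀ s < t, 2 ≤ q.1 s} =>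
        P.iProd (pathEntry M 2 j y.1.1 y.1.2)) (fun x => rfl)]
    rw [← hP.vSum_partition
      (g := fun y : {q : Pth n // ∃ t, q.1 t = 1 ∧ ∀ s < t, 2 ≤ q.1 s} =>
        (Nat.find y.2, y.1.2 (Nat.find y.2)))
      (f := fun y : {q : Pth n // ∃ t, q.1 t = 1 ∧ ∀ s < t, 2 ≤ q.1 s} =>
        P.iProd (pathEntry M 2 j y.1.1 y.1.2))]
    rw [vSum_congr (g := fun x1 : ℕ × Fin n =>
      P.smul (iMatPow R M (x1.1 + 1) 1 0 j x1.2) (mOmega P M 1 x1.2)) (fun x1 => ?_)]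
    · rw [vSum_prod_snd hP]
      show _ = P.vSum (fun l : Fin n => P.smul (iStar R M 1 0 j l) (mOmega P M 1 l))
      refine vSum_congr (fun l => ?_)
      rw [show P.smul (iStar R M 1 0 j l) (mOmega P M 1 l)
          = P.vSum (fun m : ℕ => P.smul (iMatPow R M m 1 0 j l) (mOmega P M 1 l)) from
        hP.iSum_smul _ _]
      rw [vSum_peel hP (fun m : ℕ => P.smul (iMatPow R M m 1 0 j l) (mOmega P M 1 l))]
      have hz0 : P.smul (iMatPow R M 0 1 0 j l) (mOmega P M 1 l) = P.vzero := by
        have e : iMatPow R M 0 1 0 j l = R.zero := by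
          show iMatOne R 1 0 j l = R.zero
          simp [iMatOne, bZero]
        rw [e, hP.zero_smul]
      rw [hz0, hP.vzero_vadd]
    · rw [vSum_reindex hP (fpFiber x1)
        (fun y : {y : {q : Pth n // ∃ t, q.1 t = 1 ∧ ∀ s < t, 2 ≤ q.1 s} //
            (Nat.find y.2, y.1.2 (Nat.find y.2)) = x1} =>
          P.iProd (pathEntry M 2 j y.1.1.1 y.1.1.2))
        (fun z : {q : Pth n // ClS n x1.1 x1.2 q} =>
          P.iProd (pathEntry M 2 j z.1.1 z.1.2)) (fun y => rfl)]
      exact W_eq hR hP M hM x1.1 2 (by omega) j x1.2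

end StmtThree
/-- Let `(S, V)` be a complete semiring-semimodule pair and
`M ∈ (S^{n×n})^{p*×p*}` a roc matrix with counter symbol `p`. Then
`(M^ω)_p = (M_{p,p²} + M_{p,p²}(M*)_{p,ε} + M_{p,p}) · (M^ω)_p`. -/
theorem stmt_3 {S V : Type} (R : CSOps S) (P : CPOps S V) (hR : R.IsComplete)
    (hP : P.IsComplete R) {n : ℕ} (hn : 1 ≤ n) (M : IMat n S) (hM : IsRoc R M) :
    mOmega P M 1 =
      matVec P (bAdd R (bAdd R (M 1 2) (bMul R (M 1 2) (iStar R M 1 0))) (M 1 1))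
        (mOmega P M 1) := by
  have hb : mOmega P M 2 =
      vecAdd P (mOmega P M 1) (matVec P (iStar R M 1 0) (mOmega P M 1)) :=
    funext (fun j => StmtThree.step_b hR hP M hM j)
  funext j
  rw [StmtThree.matVec_bAdd hP (bAdd R (M 1 2) (bMul R (M 1 2) (iStar R M 1 0))) (M 1 1)
    (mOmega P M 1)]
  rw [StmtThree.matVec_bAdd hP (M 1 2) (bMul R (M 1 2) (iStar R M 1 0)) (mOmega P M 1)]
  rw [StmtThree.matVec_bMul hR hP (M 1 2) (iStar R M 1 0) (mOmega P M 1)]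
  rw [← StmtThree.matVec_vecAdd hP (M 1 2) (mOmega P M 1)
    (matVec P (iStar R M 1 0) (mOmega P M 1))]
  rw [← hb]
  show mOmega P M 1 j =
    P.vadd (matVec P (M 1 2) (mOmega P M 2) j) (matVec P (M 1 1) (mOmega P M 1) j)
  rw [hP.vadd_comm]
  exact StmtThree.step_a hR hP M hM j
end

section
/- Let (S, V) be a complete semiring-semimodule pair and let M ∈ (S^{n×n})^{p*×p*} be a restricted one-counter (roc) matrix with counter symbol p. Then the vector (M^ω)_p ∈ V^n is a solution of the linear equation z = (M_{p,p²} + M_{p,p²}(M*)_{p,ε} + M_{p,p}) z over V^n. -/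
/-! ### Auxiliary infrastructure for the proof of Statement 4 -/

section Infra

open Classical

variable {S V : Type} {R : CSOps S} {P : CPOps S V}

theorem isum_add_zero (hR : R.IsComplete) (a : S) : R.add a R.zero = a := by
  rw [hR.add_comm]; exact hR.zero_add a

theorem iSum_zero (hR : R.IsComplete) {ι : Type} :
    R.iSum (fun _ : ι => R.zero) = R.zero := by
  have h := hR.mul_iSum R.zero (fun _ : ι => R.zero)
  simp only [hR.zero_mul] at h
  exact h.symm

theorem iSum_single' (hR : R.IsComplete) {ι : Type} (f : ι → S) (i₀ : ι)
    (h : ∀ i, i ≠ i₀ → f i = R.zero) : R.iSum f = f i₀ := by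
  rw [← hR.iSum_partition (fun i : ι => decide (i = i₀)) f,
    hR.iSum_pair _ true false (by simp) (fun b => by cases b <;> simp)]
  have h1 := hR.iSum_single (fun i : {i : ι // decide (i = i₀) = true} => f i.1)
    ⟨i₀, by simp⟩ (fun i => Subtype.ext (by simpa using i.2))
  have h2 : R.iSum (fun i : {i : ι // decide (i = i₀) = false} => f i.1) = R.zero := by
    rw [show (fun i : {i : ι // decide (i = i₀) = false} => f i.1) = fun _ => R.zero from
      funext fun i => h i.1 (by simpa using i.2)]
    exact iSum_zero hR
  rw [h1, h2, isum_add_zero hR]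

theorem iSum_equiv (hR : R.IsComplete) {ι κ : Type} (e : κ ≃ ι) (f : ι → S) :
    R.iSum f = R.iSum (fun k => f (e k)) := by
  rw [← hR.iSum_partition (fun k : κ => e k) (fun k => f (e k))]
  refine congrArg R.iSum (funext fun j => ?_)
  have h1 := hR.iSum_single (fun i : {k : κ // e k = j} => f (e i.1))
    ⟨e.symm j, e.apply_symm_apply j⟩
    (fun i => Subtype.ext (e.injective (by rw [i.2, e.apply_symm_apply])))
  simpa using h1.symm

theorem iSum_subtype (hR : R.IsComplete) {ι : Type} (p : ι → Prop) (f : ι → S)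
    (h : ∀ i, ¬ p i → f i = R.zero) :
    R.iSum f = R.iSum (fun x : Subtype p => f x.1) := by
  rw [← hR.iSum_partition (fun i : ι => decide (p i)) f,
    hR.iSum_pair _ true false (by simp) (fun b => by cases b <;> simp)]
  have h2 : R.iSum (fun i : {i : ι // decide (p i) = false} => f i.1) = R.zero := by
    rw [show (fun i : {i : ι // decide (p i) = false} => f i.1) = fun _ => R.zero from
      funext fun i => h i.1 (by simpa using i.2)]
    exact iSum_zero hR
  rw [h2, isum_add_zero hR]
  exact iSum_equiv hR
    (⟨fun x => ⟨x.1, by simpa using x.2⟩, fun x => ⟨x.1, by simpa using x.2⟩,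
      fun x => rfl, fun x => rfl⟩ : Subtype p ≃ {i : ι // decide (p i) = true})
    (fun x : {i : ι // decide (p i) = true} => f x.1)

theorem iSum_prod_fst (hR : R.IsComplete) {ι κ : Type} (f : ι × κ → S) :
    R.iSum f = R.iSum (fun i : ι => R.iSum fun j : κ => f (i, j)) := by
  rw [← hR.iSum_partition Prod.fst f]
  refine congrArg R.iSum (funext fun i => ?_)
  have h1 := iSum_equiv hR
    (⟨fun j => ⟨(i, j), rfl⟩, fun x => x.1.2, fun j => rfl,
      fun x => Subtype.ext (by obtain ⟨⟨a, b⟩, rfl⟩ := x; rfl)⟩ : κ ≃ {x : ι × κ // x.1 = i})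
    (fun x : {x : ι × κ // x.1 = i} => f x.1)
  simpa using h1

theorem iSum_prod_snd (hR : R.IsComplete) {ι κ : Type} (f : ι × κ → S) :
    R.iSum f = R.iSum (fun j : κ => R.iSum fun i : ι => f (i, j)) := by
  rw [← hR.iSum_partition Prod.snd f]
  refine congrArg R.iSum (funext fun j => ?_)
  have h1 := iSum_equiv hR
    (⟨fun i => ⟨(i, j), rfl⟩, fun x => x.1.1, fun i => rfl,
      fun x => Subtype.ext (by obtain ⟨⟨a, b⟩, rfl⟩ := x; rfl)⟩ : ι ≃ {x : ι × κ // x.2 = j})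
    (fun x : {x : ι × κ // x.2 = j} => f x.1)
  simpa using h1

theorem iSum_option (hR : R.IsComplete) {ι : Type} (f : Option ι → S) :
    R.iSum f = R.add (f none) (R.iSum fun i => f (some i)) := by
  rw [← hR.iSum_partition (fun o : Option ι => o.isSome) f,
    hR.iSum_pair _ false true (by simp) (fun b => by cases b <;> simp)]
  congr 1
  · have h1 := hR.iSum_single (fun x : {o : Option ι // o.isSome = false} => f x.1)
      ⟨none, rfl⟩ (fun x => Subtype.ext (by
        have := x.2
        cases hx : x.1 with
        | none => rfl
        | some a => rw [hx] at this; simp at this))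
    simpa using h1
  · exact iSum_equiv hR
      (⟨fun i => ⟨some i, rfl⟩, fun x => x.1.get x.2, fun i => rfl,
        fun x => Subtype.ext (Option.some_get x.2)⟩ : ι ≃ {o : Option ι // o.isSome = true})
      (fun x : {o : Option ι // o.isSome = true} => f x.1)

theorem iSum_nat (hR : R.IsComplete) (f : ℕ → S) :
    R.iSum f = R.add (f 0) (R.iSum fun t => f (t + 1)) := by
  rw [iSum_equiv hR
    (⟨fun o => o.elim 0 (· + 1), fun m => match m with | 0 => none | m + 1 => some m,
      fun o => by cases o <;> rfl, fun m => by cases m <;> rfl⟩ : Option ℕ ≃ ℕ) f,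
    iSum_option hR]
  simp only [Equiv.coe_fn_mk]
  rfl

theorem vadd_zero' (hP : P.IsComplete R) (v : V) : P.vadd v P.vzero = v := by
  rw [hP.vadd_comm]; exact hP.vzero_vadd v

theorem vSum_zero (hP : P.IsComplete R) {ι : Type} :
    P.vSum (fun _ : ι => P.vzero) = P.vzero := by
  have h := hP.smul_vSum R.zero (fun _ : ι => P.vzero)
  simp only [hP.zero_smul] at h
  exact h.symm

theorem vSum_equiv (hP : P.IsComplete R) {ι κ : Type} (e : κ ≃ ι) (f : ι → V) :
    P.vSum f = P.vSum (fun k => f (e k)) := by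
  rw [← hP.vSum_partition (fun k : κ => e k) (fun k => f (e k))]
  refine congrArg P.vSum (funext fun j => ?_)
  have h1 := hP.vSum_single (fun i : {k : κ // e k = j} => f (e i.1))
    ⟨e.symm j, e.apply_symm_apply j⟩
    (fun i => Subtype.ext (e.injective (by rw [i.2, e.apply_symm_apply])))
  simpa using h1.symm

theorem vSum_subtype (hP : P.IsComplete R) {ι : Type} (p : ι → Prop) (f : ι → V)
    (h : ∀ i, ¬ p i → f i = P.vzero) :
    P.vSum f = P.vSum (fun x : Subtype p => f x.1) := by
  rw [← hP.vSum_partition (fun i : ι => decide (p i)) f,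
    hP.vSum_pair _ true false (by simp) (fun b => by cases b <;> simp)]
  have h2 : P.vSum (fun i : {i : ι // decide (p i) = false} => f i.1) = P.vzero := by
    rw [show (fun i : {i : ι // decide (p i) = false} => f i.1) = fun _ => P.vzero from
      funext fun i => h i.1 (by simpa using i.2)]
    exact vSum_zero hP
  rw [h2, vadd_zero' hP]
  exact vSum_equiv hP
    (⟨fun x => ⟨x.1, by simpa using x.2⟩, fun x => ⟨x.1, by simpa using x.2⟩,
      fun x => rfl, fun x => rfl⟩ : Subtype p ≃ {i : ι // decide (p i) = true})
    (fun x : {i : ι // decide (p i) = true} => f x.1)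

theorem vSum_prod_fst (hP : P.IsComplete R) {ι κ : Type} (f : ι × κ → V) :
    P.vSum f = P.vSum (fun i : ι => P.vSum fun j : κ => f (i, j)) := by
  rw [← hP.vSum_partition Prod.fst f]
  refine congrArg P.vSum (funext fun i => ?_)
  have h1 := vSum_equiv hP
    (⟨fun j => ⟨(i, j), rfl⟩, fun x => x.1.2, fun j => rfl,
      fun x => Subtype.ext (by obtain ⟨⟨a, b⟩, rfl⟩ := x; rfl)⟩ : κ ≃ {x : ι × κ // x.1 = i})
    (fun x : {x : ι × κ // x.1 = i} => f x.1)
  simpa using h1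

theorem vSum_prod_snd (hP : P.IsComplete R) {ι κ : Type} (f : ι × κ → V) :
    P.vSum f = P.vSum (fun j : κ => P.vSum fun i : ι => f (i, j)) := by
  rw [← hP.vSum_partition Prod.snd f]
  refine congrArg P.vSum (funext fun j => ?_)
  have h1 := vSum_equiv hP
    (⟨fun i => ⟨(i, j), rfl⟩, fun x => x.1.1, fun i => rfl,
      fun x => Subtype.ext (by obtain ⟨⟨a, b⟩, rfl⟩ := x; rfl)⟩ : ι ≃ {x : ι × κ // x.2 = j})
    (fun x : {x : ι × κ // x.2 = j} => f x.1)
  simpa using h1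

theorem vSum_option (hP : P.IsComplete R) {ι : Type} (f : Option ι → V) :
    P.vSum f = P.vadd (f none) (P.vSum fun i => f (some i)) := by
  rw [← hP.vSum_partition (fun o : Option ι => o.isSome) f,
    hP.vSum_pair _ false true (by simp) (fun b => by cases b <;> simp)]
  congr 1
  · have h1 := hP.vSum_single (fun x : {o : Option ι // o.isSome = false} => f x.1)
      ⟨none, rfl⟩ (fun x => Subtype.ext (by
        have := x.2
        cases hx : x.1 with
        | none => rfl
        | some a => rw [hx] at this; simp at this))
    simpa using h1
  · exact vSum_equiv hP
      (⟨fun i => ⟨some i, rfl⟩, fun x => x.1.get x.2, fun i => rfl,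
        fun x => Subtype.ext (Option.some_get x.2)⟩ : ι ≃ {o : Option ι // o.isSome = true})
      (fun x : {o : Option ι // o.isSome = true} => f x.1)

theorem vSum_nat (hP : P.IsComplete R) (f : ℕ → V) :
    P.vSum f = P.vadd (f 0) (P.vSum fun t => f (t + 1)) := by
  rw [vSum_equiv hP
    (⟨fun o => o.elim 0 (· + 1), fun m => match m with | 0 => none | m + 1 => some m,
      fun o => by cases o <;> rfl, fun m => by cases m <;> rfl⟩ : Option ℕ ≃ ℕ) f,
    vSum_option hP]
  simp only [Equiv.coe_fn_mk]
  rfl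

theorem vSum_nat3 (hP : P.IsComplete R) (f : ℕ → V) :
    P.vSum f = P.vadd (f 0) (P.vadd (f 1) (P.vadd (f 2) (P.vSum fun t => f (t + 3)))) := by
  calc P.vSum f
      = P.vadd (f 0) (P.vSum fun t => f (t + 1)) := vSum_nat hP f
    _ = P.vadd (f 0) (P.vadd (f 1) (P.vSum fun t => f (t + 1 + 1))) :=
        congrArg (P.vadd (f 0)) (vSum_nat hP (fun t => f (t + 1)))
    _ = P.vadd (f 0) (P.vadd (f 1) (P.vadd (f 2) (P.vSum fun t => f (t + 1 + 1 + 1)))) :=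
        congrArg _ (congrArg _ (vSum_nat hP (fun t => f (t + 1 + 1))))
    _ = P.vadd (f 0) (P.vadd (f 1) (P.vadd (f 2) (P.vSum fun t => f (t + 3)))) :=
        congrArg _ (congrArg _ (congrArg _ (congrArg P.vSum
          (funext fun t => congrArg f (by omega)))))

theorem vSum_add (hP : P.IsComplete R) {ι : Type} (f g : ι → V) :
    P.vSum (fun i => P.vadd (f i) (g i)) = P.vadd (P.vSum f) (P.vSum g) := by
  have h1 := vSum_prod_fst hP (fun x : ι × Bool => if x.2 then f x.1 else g x.1)
  have h2 := vSum_prod_snd hP (fun x : ι × Bool => if x.2 then f x.1 else g x.1)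
  rw [h2] at h1
  have h3 : ∀ i : ι, P.vSum (fun b : Bool => if b then f i else g i) = P.vadd (f i) (g i) :=
    fun i => by
      rw [hP.vSum_pair _ true false (by simp) (fun b => by cases b <;> simp)]
      simp
  have h4 := hP.vSum_pair (fun b : Bool => P.vSum fun i : ι => if b then f i else g i)
    true false (by simp) (fun b => by cases b <;> simp)
  simp only [if_true, if_false] at h4
  calc P.vSum (fun i => P.vadd (f i) (g i))
      = P.vSum (fun i : ι => P.vSum fun b : Bool => if b then f i else g i) := by
        exact congrArg P.vSum (funext fun i => (h3 i).symm)
    _ = P.vadd (P.vSum f) (P.vSum g) := by rw [← h1, h4]; simp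

theorem vSum_prod_smul (hR : R.IsComplete) (hP : P.IsComplete R) {ι κ : Type}
    (f : ι → S) (g : κ → V) :
    P.vSum (fun x : ι × κ => P.smul (f x.1) (g x.2)) = P.smul (R.iSum f) (P.vSum g) := by
  rw [vSum_prod_snd hP, hP.smul_vSum]
  exact congrArg P.vSum (funext fun j => (hP.iSum_smul f (g j)).symm)

/-- Finite prefix products `s 0 ⋯ s (t-1)`. -/
def prefProd (R : CSOps S) (s : ℕ → S) : ℕ → S
  | 0 => R.one
  | t + 1 => R.mul (prefProd R s t) (s t)

theorem iProd_prefix (hP : P.IsComplete R) (s : ℕ → S) (t : ℕ) :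
    P.iProd s = P.smul (prefProd R s t) (P.iProd fun u => s (t + u)) := by
  induction t with
  | zero =>
    rw [show (fun u => s (0 + u)) = s from funext fun u => by rw [Nat.zero_add]]
    exact (hP.one_smul _).symm
  | succ t ih =>
    rw [ih, ← hP.smul_iProd_shift (fun u => s (t + u)), ← hP.mul_smul]
    show _ = P.smul (R.mul (prefProd R s t) (s (t + 0))) _
    rw [show t + 0 = t from rfl]
    refine congrArg _ (congrArg P.iProd (funext fun u => ?_))
    show s (t + (u + 1)) = s (t + 1 + u)
    congr 1
    omega

theorem iProd_zero_at (hR : R.IsComplete) (hP : P.IsComplete R) (s : ℕ → S) (t : ℕ)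
    (h : s t = R.zero) : P.iProd s = P.vzero := by
  rw [iProd_prefix hP s (t + 1)]
  show P.smul (R.mul (prefProd R s t) (s t)) _ = _
  rw [h, hR.mul_zero, hP.zero_smul]

section PathLemmas

variable {n : ℕ}

theorem Mrow0 {M : IMat n S} (hM : IsRoc R M) (j : ℕ) : M 0 j = bZero R :=
  hM.2 0 j (Or.inl rfl)

theorem Mshift {M : IMat n S} (hM : IsRoc R M) (k k' : ℕ) (hk : 1 ≤ k) :
    M (k + 1) (k' + 1) = M k k' := by
  rcases Nat.lt_trichotomy k' k with h | h | h
  · rcases eq_or_ne (k' + 1) k with h2 | h2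
    · have e1 := (hM.1 (k + 1) (by omega)).2.2
      have e2 := (hM.1 k hk).2.2
      simp only [Nat.add_sub_cancel] at e1
      have e3 : k - 1 = k' := by omega
      rw [e3] at e2
      rw [h2, e1, ← e2]
    · rw [hM.2 (k + 1) (k' + 1) (Or.inr (by omega)), hM.2 k k' (Or.inr (by omega))]
  · rw [h, (hM.1 (k + 1) (by omega)).2.1, (hM.1 k hk).2.1]
  · rcases eq_or_ne k' (k + 1) with h2 | h2
    · subst h2
      rw [(hM.1 (k + 1) (by omega)).1, (hM.1 k hk).1]
    · rw [hM.2 (k + 1) (k' + 1) (Or.inr (by omega)), hM.2 k k' (Or.inr (by omega))]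

theorem pathEntry_succ (M : IMat n S) (i : ℕ) (a : Fin n) (hs : ℕ → ℕ) (js : ℕ → Fin n) :
    (fun u => pathEntry M i a hs js (u + 1)) =
      pathEntry M (hs 0) (js 0) (fun u => hs (u + 1)) (fun u => js (u + 1)) :=
  funext fun u => by cases u <;> rfl

/-- Weight of a finite path of `t+1` steps from `(i, a)` to `(k, b)` through the
intermediate configurations given by `h`, `j`. -/
def pw (R : CSOps S) (M : IMat n S) :
    (t : ℕ) → ℕ → ℕ → Fin n → Fin n → (Fin t → ℕ) → (Fin t → Fin n) → S
  | 0, i, k, a, b, _, _ => M i k a b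
  | t + 1, i, k, a, b, h, j =>
      R.mul (M i (h 0) a (j 0))
        (pw R M t (h 0) k (j 0) b (fun s => h s.succ) (fun s => j s.succ))

theorem pw_row0 (hR : R.IsComplete) {M : IMat n S} (hM : IsRoc R M) :
    ∀ (t k : ℕ) (a b : Fin n) (h : Fin t → ℕ) (j : Fin t → Fin n),
    pw R M t 0 k a b h j = R.zero := by
  intro t
  induction t with
  | zero => intro k a b h j; show M 0 k a b = R.zero; rw [Mrow0 hM]; rfl
  | succ t ih =>
    intro k a b h j
    show R.mul (M 0 (h 0) a (j 0)) _ = R.zero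
    rw [Mrow0 hM]
    show R.mul R.zero _ = R.zero
    exact hR.zero_mul _

theorem pw_zero (hR : R.IsComplete) {M : IMat n S} (hM : IsRoc R M) :
    ∀ (t i k : ℕ) (a b : Fin n) (h : Fin t → ℕ) (j : Fin t → Fin n),
    (∃ s, h s = 0) → pw R M t i k a b h j = R.zero := by
  intro t
  induction t with
  | zero => intro i k a b h j hex; exact hex.choose.elim0
  | succ t ih =>
    intro i k a b h j hex
    obtain ⟨s, hs⟩ := hex
    rcases Fin.eq_zero_or_eq_succ s with rfl | ⟨s', rfl⟩
    · show R.mul (M i (h 0) a (j 0)) _ = R.zero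
      rw [hs, pw_row0 hR hM, hR.mul_zero]
    · show R.mul (M i (h 0) a (j 0)) _ = R.zero
      rw [ih _ _ _ _ _ _ ⟨s', hs⟩, hR.mul_zero]

theorem pw_shift {M : IMat n S} (hM : IsRoc R M) :
    ∀ (t i k : ℕ) (a b : Fin n) (h : Fin t → ℕ) (j : Fin t → Fin n), 1 ≤ i →
    (∀ s, 1 ≤ h s) →
    pw R M t (i + 1) (k + 1) a b (fun s => h s + 1) j = pw R M t i k a b h j := by
  intro t
  induction t with
  | zero =>
    intro i k a b h j hi _
    show M (i + 1) (k + 1) a b = M i k a b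
    rw [Mshift hM i k hi]
  | succ t ih =>
    intro i k a b h j hi hh
    show R.mul (M (i + 1) (h 0 + 1) a (j 0)) _ = R.mul (M i (h 0) a (j 0)) _
    rw [Mshift hM i (h 0) hi]
    exact congrArg _ (ih (h 0) k (j 0) b (fun s => h s.succ) (fun s => j s.succ)
      (hh 0) (fun s => hh s.succ))

theorem iProd_split (hP : P.IsComplete R) (M : IMat n S) :
    ∀ (t : ℕ) (i : ℕ) (a : Fin n) (hs : ℕ → ℕ) (js : ℕ → Fin n),
    P.iProd (pathEntry M i a hs js) =
      P.smul (pw R M t i (hs t) a (js t) (fun s : Fin t => hs s) (fun s : Fin t => js s))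
        (P.iProd (pathEntry M (hs t) (js t) (fun u => hs (t + 1 + u)) (fun u => js (t + 1 + u)))) := by
  intro t
  induction t with
  | zero =>
    intro i a hs js
    rw [← hP.smul_iProd_shift (pathEntry M i a hs js), pathEntry_succ]
    refine congrArg₂ P.smul rfl ?_
    rw [show (fun u => hs (0 + 1 + u)) = fun u => hs (u + 1) from
      funext fun u => congrArg hs (by omega),
      show (fun u => js (0 + 1 + u)) = fun u => js (u + 1) from
      funext fun u => congrArg js (by omega)]
  | succ t ih =>
    intro i a hs js
    rw [← hP.smul_iProd_shift (pathEntry M i a hs js), pathEntry_succ,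
      ih (hs 0) (js 0) (fun u => hs (u + 1)) (fun u => js (u + 1)), ← hP.mul_smul]
    refine congrArg₂ P.smul ?_ ?_
    · simp only [pw, pathEntry, Fin.val_zero, Fin.val_succ]
    · rw [show (fun u => hs (t + 1 + u + 1)) = fun u => hs (t + 1 + 1 + u) from
        funext fun u => congrArg hs (by omega),
        show (fun u => js (t + 1 + u + 1)) = fun u => js (t + 1 + 1 + u) from
        funext fun u => congrArg js (by omega)]

theorem pow_eq (hR : R.IsComplete) (M : IMat n S) :
    ∀ (t i k : ℕ) (a b : Fin n),
    iMatPow R M (t + 1) i k a b =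
      R.iSum fun d : (Fin t → ℕ) × (Fin t → Fin n) => pw R M t i k a b d.1 d.2 := by
  intro t
  induction t with
  | zero =>
    intro i k a b
    have inner : ∀ l : ℕ, bMul R (M i l) (iMatPow R M 0 l k) a b =
        (if l = k then M i k a b else R.zero) := by
      intro l
      by_cases hlk : l = k
      · subst hlk
        show R.iSum (fun c : Fin n => R.mul (M i l a c) (iMatOne R l l c b)) = _
        rw [if_pos rfl]
        rw [iSum_single' hR _ b ?side]
        case side =>
          intro c hc
          show R.mul (M i l a c) ((if l = l then bOne R else bZero R) c b) = R.zero
          rw [if_pos rfl]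
          show R.mul (M i l a c) (if c = b then R.one else R.zero) = R.zero
          rw [if_neg hc, hR.mul_zero]
        show R.mul (M i l a b) ((if l = l then bOne R else bZero R) b b) = _
        rw [if_pos rfl]
        show R.mul (M i l a b) (if b = b then R.one else R.zero) = _
        rw [if_pos rfl, hR.mul_one]
      · show R.iSum (fun c : Fin n => R.mul (M i l a c) (iMatOne R l k c b)) = _
        rw [if_neg hlk]
        rw [show (fun c : Fin n => R.mul (M i l a c) (iMatOne R l k c b)) =
          fun _ => R.zero from funext fun c => by
            show R.mul (M i l a c) ((if l = k then bOne R else bZero R) c b) = R.zero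
            rw [if_neg hlk]
            exact hR.mul_zero _]
        exact iSum_zero hR
    show R.iSum (fun l : ℕ => bMul R (M i l) (iMatPow R M 0 l k) a b) = _
    rw [congrArg R.iSum (funext inner), iSum_single' hR _ k (fun l hl => if_neg hl),
      if_pos rfl]
    exact (hR.iSum_single
      (fun d : (Fin 0 → ℕ) × (Fin 0 → Fin n) => pw R M 0 i k a b d.1 d.2)
      ((⟨fun s : Fin 0 => s.elim0, fun s : Fin 0 => s.elim0⟩ :
        (Fin 0 → ℕ) × (Fin 0 → Fin n)))
      (fun d => by
        apply Prod.ext <;> funext s <;> exact s.elim0)).symm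
  | succ t ih =>
    intro i k a b
    let e : (ℕ × (Fin n × ((Fin t → ℕ) × (Fin t → Fin n)))) ≃
        ((Fin (t + 1) → ℕ) × (Fin (t + 1) → Fin n)) :=
      ⟨fun x => (Fin.cons x.1 x.2.2.1, Fin.cons x.2.1 x.2.2.2),
       fun d => (d.1 0, (d.2 0, (Fin.tail d.1, Fin.tail d.2))),
       fun x => by simp [Fin.tail_cons],
       fun d => by simp [Fin.cons_self_tail]⟩
    have pwcons : ∀ (l : ℕ) (c : Fin n) (h : Fin t → ℕ) (j : Fin t → Fin n),
        pw R M (t + 1) i k a b (Fin.cons l h) (Fin.cons c j) =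
          R.mul (M i l a c) (pw R M t l k c b h j) := by
      intro l c h j
      simp only [pw, Fin.cons_zero, Fin.cons_succ]
    calc iMatPow R M (t + 1 + 1) i k a b
        = R.iSum fun l : ℕ => R.iSum fun c : Fin n =>
            R.mul (M i l a c) (iMatPow R M (t + 1) l k c b) := rfl
      _ = R.iSum fun l : ℕ => R.iSum fun c : Fin n =>
            R.iSum fun d : (Fin t → ℕ) × (Fin t → Fin n) =>
              R.mul (M i l a c) (pw R M t l k c b d.1 d.2) := by
          refine congrArg R.iSum (funext fun l => congrArg R.iSum (funext fun c => ?_))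
          rw [ih l k c b, hR.mul_iSum]
      _ = R.iSum fun l : ℕ =>
            R.iSum fun y : Fin n × ((Fin t → ℕ) × (Fin t → Fin n)) =>
              R.mul (M i l a y.1) (pw R M t l k y.1 b y.2.1 y.2.2) := by
          refine congrArg R.iSum (funext fun l => ?_)
          exact (iSum_prod_fst hR (fun y : Fin n × ((Fin t → ℕ) × (Fin t → Fin n)) =>
            R.mul (M i l a y.1) (pw R M t l k y.1 b y.2.1 y.2.2))).symm
      _ = R.iSum fun x : ℕ × (Fin n × ((Fin t → ℕ) × (Fin t → Fin n))) =>
            R.mul (M i x.1 a x.2.1) (pw R M t x.1 k x.2.1 b x.2.2.1 x.2.2.2) := by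
          exact (iSum_prod_fst hR (fun x : ℕ × (Fin n × ((Fin t → ℕ) × (Fin t → Fin n))) =>
            R.mul (M i x.1 a x.2.1) (pw R M t x.1 k x.2.1 b x.2.2.1 x.2.2.2))).symm
      _ = R.iSum fun d : (Fin (t + 1) → ℕ) × (Fin (t + 1) → Fin n) =>
            pw R M (t + 1) i k a b d.1 d.2 := by
          rw [iSum_equiv hR e (fun d : (Fin (t + 1) → ℕ) × (Fin (t + 1) → Fin n) =>
            pw R M (t + 1) i k a b d.1 d.2)]
          exact congrArg R.iSum (funext fun x =>
            (pwcons x.1 x.2.1 x.2.2.1 x.2.2.2).symm)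

theorem starChar (hR : R.IsComplete) (M : IMat n S) (b c : Fin n) :
    iStar R M 1 0 b c =
      R.iSum fun t : ℕ => R.iSum fun d : (Fin t → ℕ) × (Fin t → Fin n) =>
        pw R M t 1 0 b c d.1 d.2 := by
  show R.iSum (fun m : ℕ => iMatPow R M m 1 0 b c) = _
  rw [iSum_nat hR]
  have h0 : iMatPow R M 0 1 0 b c = R.zero := by
    show iMatOne R 1 0 b c = R.zero
    rw [show iMatOne R 1 0 = bZero R from if_neg (by omega)]
    rfl
  rw [h0, hR.zero_add]
  exact congrArg R.iSum (funext fun t => pow_eq hR M t 1 0 b c)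

end PathLemmas

section OmegaLemmas

variable {n : ℕ}

/-- Prepend a value to an infinite sequence. -/
def natCons {α : Type} (a : α) (f : ℕ → α) : ℕ → α
  | 0 => a
  | u + 1 => f u

theorem mOmega_zero (hR : R.IsComplete) (hP : P.IsComplete R) {M : IMat n S}
    (hM : IsRoc R M) (b : Fin n) : mOmega P M 0 b = P.vzero := by
  show P.vSum (fun q : (ℕ → ℕ) × (ℕ → Fin n) => P.iProd (pathEntry M 0 b q.1 q.2)) = P.vzero
  rw [show (fun q : (ℕ → ℕ) × (ℕ → Fin n) => P.iProd (pathEntry M 0 b q.1 q.2)) =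
    fun _ => P.vzero from funext fun q => iProd_zero_at hR hP _ 0 (by
      show M 0 (q.1 0) b (q.2 0) = R.zero
      rw [Mrow0 hM]; rfl)]
  exact vSum_zero hP

theorem vSum_fiber_shift (hP : P.IsComplete R) (x : ℕ × Fin n)
    (F : (ℕ → ℕ) × (ℕ → Fin n) → V) :
    P.vSum (fun q : {q : (ℕ → ℕ) × (ℕ → Fin n) // (q.1 0, q.2 0) = x} =>
      F (fun u => q.1.1 (u + 1), fun u => q.1.2 (u + 1))) = P.vSum F := by
  have h := vSum_equiv hP
    (⟨fun q : (ℕ → ℕ) × (ℕ → Fin n) => ⟨(natCons x.1 q.1, natCons x.2 q.2), rfl⟩,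
      fun y => (fun u => y.1.1 (u + 1), fun u => y.1.2 (u + 1)),
      fun q => rfl,
      fun y => Subtype.ext (by
        refine Prod.ext (funext fun u => ?_) (funext fun u => ?_) <;>
          cases u <;> first
            | exact (congrArg Prod.fst y.2).symm
            | exact (congrArg Prod.snd y.2).symm
            | rfl)⟩ :
      (ℕ → ℕ) × (ℕ → Fin n) ≃ {q : (ℕ → ℕ) × (ℕ → Fin n) // (q.1 0, q.2 0) = x})
    (fun q : {q : (ℕ → ℕ) × (ℕ → Fin n) // (q.1 0, q.2 0) = x} =>
      F (fun u => q.1.1 (u + 1), fun u => q.1.2 (u + 1)))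
  exact h.trans (congrArg P.vSum (funext fun q => rfl))

theorem stepExpand (hP : P.IsComplete R) (M : IMat n S) (i : ℕ) (a : Fin n) :
    mOmega P M i a = P.vSum fun x : ℕ × Fin n =>
      P.smul (M i x.1 a x.2) (mOmega P M x.1 x.2) := by
  show P.vSum (fun q : (ℕ → ℕ) × (ℕ → Fin n) => P.iProd (pathEntry M i a q.1 q.2)) = _
  rw [← hP.vSum_partition (fun q : (ℕ → ℕ) × (ℕ → Fin n) => (q.1 0, q.2 0))
    (fun q => P.iProd (pathEntry M i a q.1 q.2))]
  refine congrArg P.vSum (funext fun x => ?_)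
  have hw : ∀ q : {q : (ℕ → ℕ) × (ℕ → Fin n) // (q.1 0, q.2 0) = x},
      P.iProd (pathEntry M i a q.1.1 q.1.2) =
        P.smul (M i x.1 a x.2)
          (P.iProd (pathEntry M x.1 x.2 (fun u => q.1.1 (u + 1)) (fun u => q.1.2 (u + 1)))) := by
    intro q
    have h1 : q.1.1 0 = x.1 := congrArg Prod.fst q.2
    have h2 : q.1.2 0 = x.2 := congrArg Prod.snd q.2
    rw [← hP.smul_iProd_shift (pathEntry M i a q.1.1 q.1.2), pathEntry_succ, h1, h2]
    refine congrArg₂ P.smul ?_ rfl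
    show M i (q.1.1 0) a (q.1.2 0) = M i x.1 a x.2
    rw [h1, h2]
  rw [congrArg P.vSum (funext hw), ← hP.smul_vSum]
  exact congrArg (P.smul _)
    (vSum_fiber_shift hP x (fun q => P.iProd (pathEntry M x.1 x.2 q.1 q.2)))

open Classical in
/-- The first time the counter level of a path drops to `≤ 1`, together with
the state and the level there. -/
noncomputable def firstLow {n : ℕ} (q : (ℕ → ℕ) × (ℕ → Fin n)) : Option (ℕ × Fin n × ℕ) :=
  if h : ∃ t, q.1 t ≤ 1 then some (Nat.find h, q.2 (Nat.find h), q.1 (Nat.find h)) else none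

theorem firstLow_none {q : (ℕ → ℕ) × (ℕ → Fin n)} :
    firstLow q = none ↔ ∀ t, 2 ≤ q.1 t := by
  unfold firstLow
  split_ifs with h
  · exact iff_of_false (by simp)
      (fun hall => by obtain ⟨t, ht⟩ := h; have := hall t; omega)
  · exact iff_of_true rfl (fun t => by by_contra hc; exact h ⟨t, by omega⟩)

theorem firstLow_some {q : (ℕ → ℕ) × (ℕ → Fin n)} {t : ℕ} {c : Fin n} {v : ℕ} :
    firstLow q = some (t, c, v) ↔
      (∀ s, s < t → 2 ≤ q.1 s) ∧ q.1 t ≤ 1 ∧ q.2 t = c ∧ q.1 t = v := by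
  unfold firstLow
  split_ifs with h
  · constructor
    · intro he
      injection he with he'
      have h1 : Nat.find h = t := congrArg Prod.fst he'
      have h2 : q.2 (Nat.find h) = c := congrArg (fun p : ℕ × Fin n × ℕ => p.2.1) he'
      have h3 : q.1 (Nat.find h) = v := congrArg (fun p : ℕ × Fin n × ℕ => p.2.2) he'
      rw [h1] at h2 h3
      refine ⟨fun s hs => ?_, ?_, h2, h3⟩
      · rw [← h1] at hs
        have := Nat.find_min h hs
        omega
      · rw [← h1]
        exact Nat.find_spec h
    · rintro ⟨hlow, hle, hc, hv⟩
      have h1 : Nat.find h = t := by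
        rw [Nat.find_eq_iff]
        exact ⟨hle, fun m hm => by have := hlow m hm; omega⟩
      rw [h1, hc, hv]
  · exact iff_of_false (by simp) (fun hh => h ⟨t, hh.2.1⟩)

theorem pathEntry_shift_levels {M : IMat n S} (hM : IsRoc R M) (i : ℕ) (hi : 1 ≤ i)
    (a : Fin n) (hs : ℕ → ℕ) (js : ℕ → Fin n) (hhs : ∀ u, 1 ≤ hs u) :
    pathEntry M (i + 1) a (fun u => hs u + 1) js = pathEntry M i a hs js := by
  funext u
  cases u with
  | zero =>
    show M (i + 1) (hs 0 + 1) a (js 0) = M i (hs 0) a (js 0)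
    rw [Mshift hM i (hs 0) hi]
  | succ u =>
    show M (hs u + 1) (hs (u + 1) + 1) (js u) (js (u + 1)) = M (hs u) (hs (u + 1)) _ _
    rw [Mshift hM _ _ (hhs u)]

/-- The total weight of prefixes of length `t+1` from `(1, b)` to `(0, c)`. -/
def Tpref (R : CSOps S) {n : ℕ} (M : IMat n S) (t : ℕ) (b c : Fin n) : S :=
  R.iSum fun d : (Fin t → ℕ) × (Fin t → Fin n) => pw R M t 1 0 b c d.1 d.2

/-- The sum of the weights of the paths from level `2` in a given fiber of
`firstLow`. -/
def Gom (P : CPOps S V) {n : ℕ} (M : IMat n S) (b : Fin n) (y : ℕ × Fin n × ℕ) : V :=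
  P.vSum (fun q : {q : (ℕ → ℕ) × (ℕ → Fin n) // firstLow q = some y} =>
    P.iProd (pathEntry M 2 b q.1.1 q.1.2))

theorem claimB_none (hR : R.IsComplete) (hP : P.IsComplete R) {M : IMat n S}
    (hM : IsRoc R M) (b : Fin n) :
    P.vSum (fun q : {q : (ℕ → ℕ) × (ℕ → Fin n) // firstLow q = none} =>
      P.iProd (pathEntry M 2 b q.1.1 q.1.2)) = mOmega P M 1 b := by
  let e1 : {q : (ℕ → ℕ) × (ℕ → Fin n) // ∀ u, 1 ≤ q.1 u} ≃
      {q : (ℕ → ℕ) × (ℕ → Fin n) // firstLow q = none} :=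
    ⟨fun y => ⟨(fun u => y.1.1 u + 1, y.1.2),
      firstLow_none.mpr (fun u => by show 2 ≤ y.1.1 u + 1; have := y.2 u; omega)⟩,
     fun y => ⟨(fun u => y.1.1 u - 1, y.1.2),
      fun u => by show 1 ≤ y.1.1 u - 1; have := firstLow_none.mp y.2 u; omega⟩,
     fun y => Subtype.ext (Prod.ext (funext fun u => by
        show y.1.1 u + 1 - 1 = y.1.1 u; omega) rfl),
     fun y => Subtype.ext (Prod.ext (funext fun u => by
        show y.1.1 u - 1 + 1 = y.1.1 u
        have := firstLow_none.mp y.2 u; omega) rfl)⟩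
  calc P.vSum (fun q : {q : (ℕ → ℕ) × (ℕ → Fin n) // firstLow q = none} =>
        P.iProd (pathEntry M 2 b q.1.1 q.1.2))
      = P.vSum (fun y : {q : (ℕ → ℕ) × (ℕ → Fin n) // ∀ u, 1 ≤ q.1 u} =>
          P.iProd (pathEntry M 2 b (e1 y).1.1 (e1 y).1.2)) :=
        vSum_equiv hP e1 _
    _ = P.vSum (fun y : {q : (ℕ → ℕ) × (ℕ → Fin n) // ∀ u, 1 ≤ q.1 u} =>
          P.iProd (pathEntry M 1 b y.1.1 y.1.2)) := by
        refine congrArg P.vSum (funext fun y => ?_)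
        show P.iProd (pathEntry M 2 b (fun u => y.1.1 u + 1) y.1.2) = _
        exact congrArg P.iProd (pathEntry_shift_levels hM 1 (le_refl 1) b y.1.1 y.1.2 y.2)
    _ = mOmega P M 1 b := by
        show _ = P.vSum (fun q : (ℕ → ℕ) × (ℕ → Fin n) =>
          P.iProd (pathEntry M 1 b q.1 q.2))
        refine (vSum_subtype hP (fun q : (ℕ → ℕ) × (ℕ → Fin n) => ∀ u, 1 ≤ q.1 u)
          (fun q : (ℕ → ℕ) × (ℕ → Fin n) => P.iProd (pathEntry M 1 b q.1 q.2))
          (fun q hq => ?_)).symm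
        obtain ⟨u, hu⟩ := not_forall.mp hq
        rw [not_le] at hu
        refine iProd_zero_at hR hP _ (u + 1) ?_
        show M (q.1 u) (q.1 (u + 1)) (q.2 u) (q.2 (u + 1)) = R.zero
        rw [show q.1 u = 0 from by omega, Mrow0 hM]
        rfl

theorem claimB_bad (hR : R.IsComplete) (hP : P.IsComplete R) {M : IMat n S}
    (hM : IsRoc R M) (b : Fin n) (y : ℕ × Fin n × ℕ) (hy : y.2.2 ≠ 1) :
    Gom P M b y = P.vzero := by
  obtain ⟨t, c, v⟩ := y
  simp only at hy
  rcases Nat.lt_or_ge v 1 with h1 | h2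
  · have hz : ∀ q : {q : (ℕ → ℕ) × (ℕ → Fin n) // firstLow q = some (t, c, v)},
        P.iProd (pathEntry M 2 b q.1.1 q.1.2) = P.vzero := by
      intro q
      obtain ⟨_, _, _, hv0⟩ := firstLow_some.mp q.2
      refine iProd_zero_at hR hP _ (t + 1) ?_
      show M (q.1.1 t) (q.1.1 (t + 1)) (q.1.2 t) (q.1.2 (t + 1)) = R.zero
      rw [show q.1.1 t = 0 from by omega, Mrow0 hM]
      rfl
    show P.vSum _ = P.vzero
    rw [congrArg P.vSum (funext hz)]
    exact vSum_zero hP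
  · rcases Nat.lt_or_ge v 2 with h3 | h4
    · omega
    · refine hP.vSum_empty (fun q : {q : (ℕ → ℕ) × (ℕ → Fin n) //
        firstLow q = some (t, c, v)} => P.iProd (pathEntry M 2 b q.1.1 q.1.2))
        ⟨fun q => ?_⟩
      obtain ⟨_, hle, _, hveq⟩ := firstLow_some.mp q.2
      omega

theorem Tpref_up (hR : R.IsComplete) (hP : P.IsComplete R) {M : IMat n S}
    (hM : IsRoc R M) (t : ℕ) (b c : Fin n) :
    R.iSum (fun d : (Fin t → {m : ℕ // 2 ≤ m}) × (Fin t → Fin n) =>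
      pw R M t 2 1 b c (fun s => (d.1 s).1) d.2) = Tpref R M t b c := by
  have st1 : Tpref R M t b c =
      R.iSum (fun d : {d : (Fin t → ℕ) × (Fin t → Fin n) // ∀ s, 1 ≤ d.1 s} =>
        pw R M t 1 0 b c d.1.1 d.1.2) := by
    refine iSum_subtype hR _ _ (fun d hd => ?_)
    push_neg at hd
    obtain ⟨s, hs⟩ := hd
    exact pw_zero hR hM t 1 0 b c d.1 d.2 ⟨s, by omega⟩
  let e4 : ((Fin t → {m : ℕ // 2 ≤ m}) × (Fin t → Fin n)) ≃
      {d : (Fin t → ℕ) × (Fin t → Fin n) // ∀ s, 1 ≤ d.1 s} :=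
    ⟨fun x => ⟨((fun s => (x.1 s).1 - 1), x.2), fun s => by
        show 1 ≤ (x.1 s).1 - 1; have := (x.1 s).2; omega⟩,
     fun y => ((fun s => ⟨y.1.1 s + 1, by have := y.2 s; omega⟩), y.1.2),
     fun x => Prod.ext (funext fun s => Subtype.ext (by
        show (x.1 s).1 - 1 + 1 = (x.1 s).1
        have := (x.1 s).2; omega)) rfl,
     fun y => Subtype.ext (Prod.ext (funext fun s => by
        show y.1.1 s + 1 - 1 = y.1.1 s; omega) rfl)⟩
  rw [st1, iSum_equiv hR e4
    (fun d : {d : (Fin t → ℕ) × (Fin t → Fin n) // ∀ s, 1 ≤ d.1 s} =>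
      pw R M t 1 0 b c d.1.1 d.1.2)]
  refine congrArg R.iSum (funext fun x => ?_)
  show pw R M t 2 1 b c (fun s => (x.1 s).1) x.2 =
    pw R M t 1 0 b c (fun s => (x.1 s).1 - 1) x.2
  rw [← pw_shift hM t 1 0 b c (fun s => (x.1 s).1 - 1) x.2 (le_refl 1)
    (fun s => by show 1 ≤ (x.1 s).1 - 1; have := (x.1 s).2; omega)]
  exact congrArg₂ (fun (h : Fin t → ℕ) (j : Fin t → Fin n) => pw R M t 2 1 b c h j)
    (funext fun s => by show (x.1 s).1 = (x.1 s).1 - 1 + 1; have := (x.1 s).2; omega) rfl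

theorem claimB_good (hR : R.IsComplete) (hP : P.IsComplete R) {M : IMat n S}
    (hM : IsRoc R M) (b : Fin n) (t : ℕ) (c : Fin n) :
    Gom P M b (t, c, 1) = P.smul (Tpref R M t b c) (mOmega P M 1 c) := by
  let glue : ((Fin t → {m : ℕ // 2 ≤ m}) × (Fin t → Fin n)) ×
      ((ℕ → ℕ) × (ℕ → Fin n)) → (ℕ → ℕ) × (ℕ → Fin n) := fun x =>
    (fun u => if h : u < t then (x.1.1 ⟨u, h⟩).1 else if u = t then 1 else x.2.1 (u - (t + 1)),
     fun u => if h : u < t then x.1.2 ⟨u, h⟩ else if u = t then c else x.2.2 (u - (t + 1)))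
  have glue1_lt : ∀ x u (h : u < t), (glue x).1 u = (x.1.1 ⟨u, h⟩).1 := by
    intro x u h
    show (if h' : u < t then ((x.1.1 ⟨u, h'⟩ : {m : ℕ // 2 ≤ m}) : ℕ)
      else if u = t then 1 else x.2.1 (u - (t + 1))) = _
    rw [dif_pos h]
  have glue2_lt : ∀ x u (h : u < t), (glue x).2 u = x.1.2 ⟨u, h⟩ := by
    intro x u h
    show (if h' : u < t then x.1.2 ⟨u, h'⟩
      else if u = t then c else x.2.2 (u - (t + 1))) = _
    rw [dif_pos h]
  have glue1_t : ∀ x, (glue x).1 t = 1 := by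
    intro x
    show (if h' : t < t then ((x.1.1 ⟨t, h'⟩ : {m : ℕ // 2 ≤ m}) : ℕ)
      else if t = t then 1 else x.2.1 (t - (t + 1))) = 1
    rw [dif_neg (lt_irrefl t), if_pos rfl]
  have glue2_t : ∀ x, (glue x).2 t = c := by
    intro x
    show (if h' : t < t then x.1.2 ⟨t, h'⟩
      else if t = t then c else x.2.2 (t - (t + 1))) = c
    rw [dif_neg (lt_irrefl t), if_pos rfl]
  have glue1_gt : ∀ x u, (glue x).1 (t + 1 + u) = x.2.1 u := by
    intro x u
    show (if h' : t + 1 + u < t then ((x.1.1 ⟨t + 1 + u, h'⟩ : {m : ℕ // 2 ≤ m}) : ℕ)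
      else if t + 1 + u = t then 1 else x.2.1 (t + 1 + u - (t + 1))) = x.2.1 u
    rw [dif_neg (by omega), if_neg (by omega)]
    exact congrArg x.2.1 (by omega)
  have glue2_gt : ∀ x u, (glue x).2 (t + 1 + u) = x.2.2 u := by
    intro x u
    show (if h' : t + 1 + u < t then x.1.2 ⟨t + 1 + u, h'⟩
      else if t + 1 + u = t then c else x.2.2 (t + 1 + u - (t + 1))) = x.2.2 u
    rw [dif_neg (by omega), if_neg (by omega)]
    exact congrArg x.2.2 (by omega)
  let e2 : (((Fin t → {m : ℕ // 2 ≤ m}) × (Fin t → Fin n)) ×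
      ((ℕ → ℕ) × (ℕ → Fin n))) ≃
      {q : (ℕ → ℕ) × (ℕ → Fin n) // firstLow q = some (t, c, 1)} := by
    refine ⟨fun x => ⟨glue x, firstLow_some.mpr
        ⟨fun s hs => by rw [glue1_lt x s hs]; exact (x.1.1 ⟨s, hs⟩).2,
         by rw [glue1_t x], glue2_t x, glue1_t x⟩⟩,
      fun y => ((fun s => ⟨y.1.1 s, (firstLow_some.mp y.2).1 s s.isLt⟩, fun s => y.1.2 s),
        (fun u => y.1.1 (t + 1 + u), fun u => y.1.2 (t + 1 + u))), ?_, ?_⟩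
    · intro x
      refine Prod.ext (Prod.ext (funext fun s => Subtype.ext ?_) (funext fun s => ?_))
        (Prod.ext (funext fun u => ?_) (funext fun u => ?_))
      · show (glue x).1 ↑s = ((x.1.1 s : {m : ℕ // 2 ≤ m}) : ℕ)
        rw [glue1_lt x ↑s s.isLt]
      · show (glue x).2 ↑s = x.1.2 s
        rw [glue2_lt x ↑s s.isLt]
      · exact glue1_gt x u
      · exact glue2_gt x u
    · intro y
      obtain ⟨hlow, _, hc, h1⟩ := firstLow_some.mp y.2
      refine Subtype.ext (Prod.ext (funext fun u => ?_) (funext fun u => ?_))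
      · show (glue _).1 u = y.1.1 u
        rcases Nat.lt_trichotomy u t with h | h | h
        · rw [glue1_lt _ u h]
        · subst h; rw [glue1_t, h1]
        · rw [show u = t + 1 + (u - (t + 1)) from by omega, glue1_gt]
      · show (glue _).2 u = y.1.2 u
        rcases Nat.lt_trichotomy u t with h | h | h
        · rw [glue2_lt _ u h]
        · subst h; rw [glue2_t, hc]
        · rw [show u = t + 1 + (u - (t + 1)) from by omega, glue2_gt]
  have hw : ∀ x : (((Fin t → {m : ℕ // 2 ≤ m}) × (Fin t → Fin n)) ×
      ((ℕ → ℕ) × (ℕ → Fin n))),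
      P.iProd (pathEntry M 2 b (glue x).1 (glue x).2) =
        P.smul (pw R M t 2 1 b c (fun s => (x.1.1 s).1) x.1.2)
          (P.iProd (pathEntry M 1 c x.2.1 x.2.2)) := by
    intro x
    rw [iProd_split hP M t 2 b (glue x).1 (glue x).2]
    refine congrArg₂ P.smul ?_ ?_
    · rw [glue1_t, glue2_t,
        show (fun s : Fin t => (glue x).1 ↑s) = fun s => (x.1.1 s).1 from
          funext fun s => by rw [glue1_lt x ↑s s.isLt],
        show (fun s : Fin t => (glue x).2 ↑s) = x.1.2 from
          funext fun s => by rw [glue2_lt x ↑s s.isLt]]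
    · rw [glue1_t, glue2_t,
        show (fun u => (glue x).1 (t + 1 + u)) = x.2.1 from funext (glue1_gt x),
        show (fun u => (glue x).2 (t + 1 + u)) = x.2.2 from funext (glue2_gt x)]
  calc Gom P M b (t, c, 1)
      = P.vSum (fun x : (((Fin t → {m : ℕ // 2 ≤ m}) × (Fin t → Fin n)) ×
          ((ℕ → ℕ) × (ℕ → Fin n))) =>
            P.iProd (pathEntry M 2 b (glue x).1 (glue x).2)) := by
        exact vSum_equiv hP e2 (fun q : {q : (ℕ → ℕ) × (ℕ → Fin n) //
          firstLow q = some (t, c, 1)} => P.iProd (pathEntry M 2 b q.1.1 q.1.2))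
    _ = P.vSum (fun x : (((Fin t → {m : ℕ // 2 ≤ m}) × (Fin t → Fin n)) ×
          ((ℕ → ℕ) × (ℕ → Fin n))) =>
            P.smul (pw R M t 2 1 b c (fun s => (x.1.1 s).1) x.1.2)
              (P.iProd (pathEntry M 1 c x.2.1 x.2.2))) :=
        congrArg P.vSum (funext hw)
    _ = P.smul (R.iSum fun d : (Fin t → {m : ℕ // 2 ≤ m}) × (Fin t → Fin n) =>
          pw R M t 2 1 b c (fun s => (d.1 s).1) d.2)
          (P.vSum fun q : (ℕ → ℕ) × (ℕ → Fin n) =>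
            P.iProd (pathEntry M 1 c q.1 q.2)) :=
        vSum_prod_smul hR hP
          (fun d : (Fin t → {m : ℕ // 2 ≤ m}) × (Fin t → Fin n) =>
            pw R M t 2 1 b c (fun s => (d.1 s).1) d.2)
          (fun q : (ℕ → ℕ) × (ℕ → Fin n) => P.iProd (pathEntry M 1 c q.1 q.2))
    _ = P.smul (Tpref R M t b c) (mOmega P M 1 c) := by
        rw [Tpref_up hR hP hM t b c]
        rfl

theorem claimB (hR : R.IsComplete) (hP : P.IsComplete R) {M : IMat n S} (hM : IsRoc R M)
    (b : Fin n) :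
    mOmega P M 2 b = P.vadd (mOmega P M 1 b)
      (P.vSum fun c : Fin n => P.smul (iStar R M 1 0 b c) (mOmega P M 1 c)) := by
  classical
  show P.vSum (fun q : (ℕ → ℕ) × (ℕ → Fin n) => P.iProd (pathEntry M 2 b q.1 q.2)) = _
  rw [← hP.vSum_partition firstLow
    (fun q : (ℕ → ℕ) × (ℕ → Fin n) => P.iProd (pathEntry M 2 b q.1 q.2)),
    vSum_option hP]
  refine congrArg₂ P.vadd (claimB_none hR hP hM b) ?_
  show P.vSum (fun y : ℕ × Fin n × ℕ => Gom P M b y) = _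
  rw [vSum_subtype hP (fun y : ℕ × Fin n × ℕ => y.2.2 = 1) (fun y => Gom P M b y)
    (fun y hy => claimB_bad hR hP hM b y hy)]
  rw [vSum_equiv hP
    (⟨fun x : ℕ × Fin n => ⟨(x.1, x.2, 1), rfl⟩,
      fun y => (y.1.1, y.1.2.1),
      fun x => rfl,
      fun y => Subtype.ext (by
        obtain ⟨⟨t, c, v⟩, hv⟩ := y
        cases hv
        rfl)⟩ : (ℕ × Fin n) ≃ {y : ℕ × Fin n × ℕ // y.2.2 = 1})
    (fun y : {y : ℕ × Fin n × ℕ // y.2.2 = 1} => Gom P M b y.1)]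
  calc P.vSum (fun x : ℕ × Fin n => Gom P M b ((x.1, x.2, 1) : ℕ × Fin n × ℕ))
      = P.vSum (fun x : ℕ × Fin n => P.smul (Tpref R M x.1 b x.2) (mOmega P M 1 x.2)) :=
        congrArg P.vSum (funext fun x => claimB_good hR hP hM b x.1 x.2)
    _ = P.vSum (fun c : Fin n => P.vSum (fun t : ℕ =>
          P.smul (Tpref R M t b c) (mOmega P M 1 c))) :=
        vSum_prod_snd hP _
    _ = P.vSum (fun c : Fin n => P.smul (iStar R M 1 0 b c) (mOmega P M 1 c)) := by
        refine congrArg P.vSum (funext fun c => ?_)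
        rw [← hP.iSum_smul (fun t => Tpref R M t b c) (mOmega P M 1 c)]
        refine congrArg₂ P.smul ?_ rfl
        exact (starChar hR M b c).symm

end OmegaLemmas

end Infra

/-- Let `(S, V)` be a complete semiring-semimodule pair and
`M ∈ (S^{n×n})^{p*×p*}` a roc matrix with counter symbol `p`. Then the vector
`(M^ω)_p ∈ V^n` is a solution of the linear equation
`z = (M_{p,p²} + M_{p,p²}(M*)_{p,ε} + M_{p,p}) z` over `V^n`. -/
theorem stmt_4 {S V : Type} (R : CSOps S) (P : CPOps S V) (hR : R.IsComplete)
    (hP : P.IsComplete R) {n : ℕ} (hn : 1 ≤ n) (M : IMat n S) (hM : IsRoc R M) :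
    IsLinSol R P M (mOmega P M 1) := by
  show mOmega P M 1 = matVec P (linMat R M) (mOmega P M 1)
  funext a
  have hG0 : P.vSum (fun b : Fin n => P.smul (M 1 0 a b) (mOmega P M 0 b)) = P.vzero := by
    rw [show (fun b : Fin n => P.smul (M 1 0 a b) (mOmega P M 0 b)) = fun _ => P.vzero from
      funext fun b => by rw [mOmega_zero hR hP hM b]; exact hP.smul_vzero _]
    exact vSum_zero hP
  have htail : P.vSum (fun t : ℕ => P.vSum (fun b : Fin n =>
      P.smul (M 1 (t + 3) a b) (mOmega P M (t + 3) b))) = P.vzero := by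
    rw [show (fun t : ℕ => P.vSum (fun b : Fin n =>
        P.smul (M 1 (t + 3) a b) (mOmega P M (t + 3) b))) = fun _ => P.vzero from
      funext fun t => by
        rw [show (fun b : Fin n => P.smul (M 1 (t + 3) a b) (mOmega P M (t + 3) b)) =
          fun _ => P.vzero from funext fun b => by
            rw [hM.2 1 (t + 3) (Or.inr ⟨by omega, by omega, by omega⟩)]
            show P.smul R.zero _ = P.vzero
            exact hP.zero_smul _]
        exact vSum_zero hP]
    exact vSum_zero hP
  have hG2 : P.vSum (fun b : Fin n => P.smul (M 1 2 a b) (mOmega P M 2 b)) =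
      P.vadd (P.vSum fun b : Fin n => P.smul (M 1 2 a b) (mOmega P M 1 b))
        (P.vSum fun c : Fin n =>
          P.smul (bMul R (M 1 2) (iStar R M 1 0) a c) (mOmega P M 1 c)) := by
    calc P.vSum (fun b : Fin n => P.smul (M 1 2 a b) (mOmega P M 2 b))
        = P.vSum (fun b : Fin n => P.vadd (P.smul (M 1 2 a b) (mOmega P M 1 b))
            (P.smul (M 1 2 a b) (P.vSum fun c : Fin n =>
              P.smul (iStar R M 1 0 b c) (mOmega P M 1 c)))) := by
          refine congrArg P.vSum (funext fun b => ?_)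
          rw [claimB hR hP hM b, hP.smul_vadd]
      _ = P.vadd (P.vSum fun b : Fin n => P.smul (M 1 2 a b) (mOmega P M 1 b))
            (P.vSum fun b : Fin n => P.smul (M 1 2 a b) (P.vSum fun c : Fin n =>
              P.smul (iStar R M 1 0 b c) (mOmega P M 1 c))) := vSum_add hP _ _
      _ = P.vadd (P.vSum fun b : Fin n => P.smul (M 1 2 a b) (mOmega P M 1 b))
            (P.vSum fun b : Fin n => P.vSum fun c : Fin n =>
              P.smul (R.mul (M 1 2 a b) (iStar R M 1 0 b c)) (mOmega P M 1 c)) := by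
          refine congrArg (P.vadd _) (congrArg P.vSum (funext fun b => ?_))
          rw [hP.smul_vSum]
          refine congrArg P.vSum (funext fun c => ?_)
          rw [hP.mul_smul]
      _ = P.vadd (P.vSum fun b : Fin n => P.smul (M 1 2 a b) (mOmega P M 1 b))
            (P.vSum fun x : Fin n × Fin n =>
              P.smul (R.mul (M 1 2 a x.1) (iStar R M 1 0 x.1 x.2)) (mOmega P M 1 x.2)) :=
          congrArg (P.vadd _) (vSum_prod_fst hP (fun x : Fin n × Fin n =>
            P.smul (R.mul (M 1 2 a x.1) (iStar R M 1 0 x.1 x.2)) (mOmega P M 1 x.2))).symm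
      _ = P.vadd (P.vSum fun b : Fin n => P.smul (M 1 2 a b) (mOmega P M 1 b))
            (P.vSum fun c : Fin n => P.vSum fun b : Fin n =>
              P.smul (R.mul (M 1 2 a b) (iStar R M 1 0 b c)) (mOmega P M 1 c)) :=
          congrArg (P.vadd _) (vSum_prod_snd hP (fun x : Fin n × Fin n =>
            P.smul (R.mul (M 1 2 a x.1) (iStar R M 1 0 x.1 x.2)) (mOmega P M 1 x.2)))
      _ = P.vadd (P.vSum fun b : Fin n => P.smul (M 1 2 a b) (mOmega P M 1 b))
            (P.vSum fun c : Fin n =>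
              P.smul (bMul R (M 1 2) (iStar R M 1 0) a c) (mOmega P M 1 c)) := by
          refine congrArg (P.vadd _) (congrArg P.vSum (funext fun c => ?_))
          exact (hP.iSum_smul (fun b : Fin n => R.mul (M 1 2 a b) (iStar R M 1 0 b c))
            (mOmega P M 1 c)).symm
  have hrhs : matVec P (linMat R M) (mOmega P M 1) a =
      P.vadd (P.vadd (P.vSum fun b : Fin n => P.smul (M 1 2 a b) (mOmega P M 1 b))
          (P.vSum fun c : Fin n =>
            P.smul (bMul R (M 1 2) (iStar R M 1 0) a c) (mOmega P M 1 c)))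
        (P.vSum fun b : Fin n => P.smul (M 1 1 a b) (mOmega P M 1 b)) := by
    calc matVec P (linMat R M) (mOmega P M 1) a
        = P.vSum (fun l : Fin n => P.vadd (P.vadd (P.smul (M 1 2 a l) (mOmega P M 1 l))
            (P.smul (bMul R (M 1 2) (iStar R M 1 0) a l) (mOmega P M 1 l)))
            (P.smul (M 1 1 a l) (mOmega P M 1 l))) := by
          refine congrArg P.vSum (funext fun l => ?_)
          show P.smul (R.add (R.add (M 1 2 a l) (bMul R (M 1 2) (iStar R M 1 0) a l))
            (M 1 1 a l)) (mOmega P M 1 l) = _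
          rw [hP.add_smul, hP.add_smul]
      _ = P.vadd (P.vSum fun l : Fin n => P.vadd (P.smul (M 1 2 a l) (mOmega P M 1 l))
            (P.smul (bMul R (M 1 2) (iStar R M 1 0) a l) (mOmega P M 1 l)))
            (P.vSum fun b : Fin n => P.smul (M 1 1 a b) (mOmega P M 1 b)) :=
          vSum_add hP _ _
      _ = _ := congrArg₂ P.vadd (vSum_add hP _ _) rfl
  calc mOmega P M 1 a
      = P.vSum (fun k : ℕ => P.vSum (fun b : Fin n =>
          P.smul (M 1 k a b) (mOmega P M k b))) := by
        rw [stepExpand hP M 1 a]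
        exact vSum_prod_fst hP (fun x : ℕ × Fin n =>
          P.smul (M 1 x.1 a x.2) (mOmega P M x.1 x.2))
    _ = P.vadd (P.vSum (fun b : Fin n => P.smul (M 1 0 a b) (mOmega P M 0 b)))
          (P.vadd (P.vSum (fun b : Fin n => P.smul (M 1 1 a b) (mOmega P M 1 b)))
            (P.vadd (P.vSum (fun b : Fin n => P.smul (M 1 2 a b) (mOmega P M 2 b)))
              (P.vSum (fun t : ℕ => P.vSum (fun b : Fin n =>
                P.smul (M 1 (t + 3) a b) (mOmega P M (t + 3) b)))))) :=
        vSum_nat3 hP (fun k : ℕ => P.vSum (fun b : Fin n =>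
          P.smul (M 1 k a b) (mOmega P M k b)))
    _ = P.vadd (P.vSum (fun b : Fin n => P.smul (M 1 1 a b) (mOmega P M 1 b)))
          (P.vSum (fun b : Fin n => P.smul (M 1 2 a b) (mOmega P M 2 b))) := by
        rw [hG0, htail, hP.vzero_vadd, vadd_zero' hP]
    _ = P.vadd (P.vSum (fun b : Fin n => P.smul (M 1 1 a b) (mOmega P M 1 b)))
          (P.vadd (P.vSum fun b : Fin n => P.smul (M 1 2 a b) (mOmega P M 1 b))
            (P.vSum fun c : Fin n =>
              P.smul (bMul R (M 1 2) (iStar R M 1 0) a c) (mOmega P M 1 c))) :=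
        congrArg (P.vadd _) hG2
    _ = matVec P (linMat R M) (mOmega P M 1) a := by
        rw [hrhs, hP.vadd_comm]
end
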